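/- arXiv:1511.04061 — 4 statements merged into one kernel-verified Lean document; each statement's English description precedes it below -/
import Mathlib

section
/- Let F : K^d → K^d be a nonzero additive polynomial mapping over K and let 1 ≤ s < s_+ be real numbers. Then for all sufficiently large n (depending on s, s_+ and F), every monomial occurring in any component of F^{∘n} with total degree at most s^n has coefficient of height h_K at most s_+^n. -/
open MvPolynomial Filter

noncomputable section

/-- Data modelling the set of closed points of a smooth projective geometrically
connected curve `C` over a finite field, for its function field `K = K(C)`:
for each closed point `v` we record the normalized valuation `ord v` of `K` at `v`
and the cardinality `resCard v` of the (finite) residue field `k(v)`. -/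
structure PlaceData (K : Type*) [Field K] where
  Pt : Type
  ord : Pt → K → ℤ
  resCard : Pt → ℕ
  two_le_resCard : ∀ v, 2 ≤ resCard v
  ord_one : ∀ v, ord v 1 = 0
  ord_mul : ∀ v (a b : K), a ≠ 0 → b ≠ 0 → ord v (a * b) = ord v a + ord v b
  min_le_ord_add : ∀ v (a b : K), a ≠ 0 → b ≠ 0 → a + b ≠ 0 →
    min (ord v a) (ord v b) ≤ ord v (a + b)
  finite_mulSupport : ∀ a : K, a ≠ 0 → {v | ord v a ≠ 0}.Finite
  exists_finite_residue_reps : ∀ v, ∃ R : Finset K, ∀ a : K, (a = 0 ∨ 0 ≤ ord v a) →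
      ∃ b ∈ R, a - b = 0 ∨ 0 < ord v (a - b)
  product_formula : ∀ a : K, a ≠ 0 →
      ∑ᶠ v, (ord v a : ℝ) * Real.log (resCard v) = 0

variable {K : Type*} [Field K]

open Classical in
/-- `ord_v^-(a) = min(ord_v(a), 0)`, with the convention `ord_v^-(0) = 0`
(coming from `ord_v(0) = +∞`). -/
def PlaceData.ordMinus (Pl : PlaceData K) (v : Pl.Pt) (a : K) : ℤ :=
  if a = 0 then 0 else min (Pl.ord v a) 0

/-- The affine logarithmic Weil height of an element of `K`. -/
def PlaceData.h1 (Pl : PlaceData K) (a : K) : ℝ :=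
  -∑ᶠ v, (Pl.ordMinus v a : ℝ) * Real.log (Pl.resCard v)

/-- The affine logarithmic Weil height
`h_K(a_1, …, a_d) = -∑_v min_j ord_v^-(a_j) · log |k(v)|` of a point of `K^d`
(written via `-min_j ord_v^-(a_j) = max_j (-ord_v^-(a_j)) = sup_j (-ord_v^-(a_j)).toNat`). -/
def PlaceData.h (Pl : PlaceData K) {d : ℕ} (x : Fin d → K) : ℝ :=
  ∑ᶠ v, ((Finset.univ.sup fun j => (-(Pl.ordMinus v (x j))).toNat : ℕ) : ℝ) *
    Real.log (Pl.resCard v)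

/-- Iterates `F^{∘n}` of a polynomial self-map of affine `d`-space,
at the level of coordinate polynomials. -/
def polyIter {R : Type*} [CommSemiring R] {d : ℕ} (F : Fin d → MvPolynomial (Fin d) R) :
    ℕ → Fin d → MvPolynomial (Fin d) R
  | 0 => fun j => X j
  | n + 1 => fun j => bind₁ (polyIter F n) (F j)

/-- The (total) degree of a polynomial map. -/
def polyDeg {R : Type*} [CommSemiring R] {d e : ℕ} (F : Fin e → MvPolynomial (Fin d) R) : ℕ :=
  Finset.univ.sup fun j => (F j).totalDegree

/-- Evaluation of a polynomial map at a point. -/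
def polyMapEval {R : Type*} [CommSemiring R] {d e : ℕ} (F : Fin e → MvPolynomial (Fin d) R)
    (x : Fin d → R) : Fin e → R :=
  fun j => eval x (F j)

/-- A polynomial is additive (in characteristic `p`) iff it is of the form
`∑_i ∑_k a_{i,k} X_k^{p^i}`. -/
def IsAddPoly (p : ℕ) {R : Type*} [CommSemiring R] {d : ℕ} (f : MvPolynomial (Fin d) R) : Prop :=
  ∃ (r : ℕ) (a : ℕ → Fin d → R),
    f = ∑ i ∈ Finset.range (r + 1), ∑ k : Fin d, C (a i k) * X k ^ p ^ i

/-- The additive polynomial self-map `A_0 + A_1 τ + ⋯ + A_r τ^r` of `𝔾_a^d`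
attached to matrices `A_0, …, A_r`. -/
def addPolyOf {R : Type*} [CommSemiring R] (p d r : ℕ) (A : ℕ → Matrix (Fin d) (Fin d) R) :
    Fin d → MvPolynomial (Fin d) R :=
  fun j => ∑ i ∈ Finset.range (r + 1), ∑ k : Fin d, C (A i j k) * X k ^ p ^ i

/-- The dynamic degree `δ = lim_n (deg F^{∘n})^{1/n}` (the limit exists and
equals this `limsup`). -/
def dynDeg {R : Type*} [CommSemiring R] {d : ℕ} (F : Fin d → MvPolynomial (Fin d) R) : ℝ :=
  limsup (fun n : ℕ => ((polyDeg (polyIter F n) : ℝ)) ^ ((n : ℝ)⁻¹)) atTop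

/-- A point is preperiodic when its forward orbit is finite. -/
def Preperiodic {α : Type*} (f : α → α) (x : α) : Prop :=
  (Set.range fun n : ℕ => f^[n] x).Finite

/-- The vanishing ideal of a subset `H ⊆ K^d`. -/
def vanishingIdealOf {d : ℕ} (H : Set (Fin d → K)) : Ideal (MvPolynomial (Fin d) K) :=
  ⨅ x ∈ H, RingHom.ker (eval x)

/-- `H` is (the set of `K`-points of) a connected algebraic subgroup of the vector group
`𝔾_a^d`: it is Zariski closed, a subgroup of `(K^d, +)`, and connected
(equivalently irreducible, encoded by primality of its vanishing ideal). -/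
def IsConnAlgSubgroup {d : ℕ} (H : Set (Fin d → K)) : Prop :=
  (∃ S : Set (MvPolynomial (Fin d) K), H = {x | ∀ f ∈ S, eval x f = 0}) ∧
  (0 : Fin d → K) ∈ H ∧
  (∀ x ∈ H, ∀ y ∈ H, x + y ∈ H) ∧
  (∀ x ∈ H, -x ∈ H) ∧
  (vanishingIdealOf H).IsPrime

/-- The dimension of the linear span of the products of the functions
`Ψ_{i,n,j} = (m_i ∘ F^{∘n})^j`, `1 ≤ i ≤ d`, `0 ≤ n < N`, `0 ≤ j < L`, over subsets
of the index set. -/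
def satRank {d : ℕ} (F : Fin d → MvPolynomial (Fin d) K) (L N : ℕ) : ℕ :=
  Module.finrank K (Submodule.span K (Set.range fun s : Finset (Fin d × Fin N × Fin L) =>
    ∏ t ∈ s, (polyIter F (t.2.1 : ℕ) t.1) ^ ((t.2.2 : ℕ))))

/-- The saturation degree `κ(F)`. -/
def satDeg {d : ℕ} (F : Fin d → MvPolynomial (Fin d) K) : ℝ :=
  sSup {c : ℝ | 0 < c ∧ ∃ L : ℕ, ∀ᶠ N : ℕ in atTop,
    (c ^ (d * N) : ℝ) < (satRank F L N : ℝ)}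

/-! At a place `v`, say that a polynomial has slope `b` if each of its coefficients has pole
order at most `b` times the degree of its monomial. Slopes survive sums and products, and
substituting polynomials of slope `b` without constant term into a polynomial without constant
term whose coefficients have pole order at most `c` gives slope `b + c`. An additive `F` has no
constant term, so `F^{∘n}` has slope `n · c_v`. Summing over the places, the coefficient of a
monomial of degree `e ≤ s^n` in `F^{∘n}` has height at most `n s^n H`, with `H` the total height
of the coefficients of `F`, and `n s^n H ≤ s₊^n` eventually since `n (s / s₊)^n → 0`. -/

namespace PlaceData

variable (Pl : PlaceData K) (v : Pl.Pt)

def poleOrd (a : K) : ℕ := (-Pl.ordMinus v a).toNat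

theorem poleOrd_zero : Pl.poleOrd v 0 = 0 := by
  simp [poleOrd, ordMinus]

theorem poleOrd_one : Pl.poleOrd v 1 = 0 := by
  simp [poleOrd, ordMinus, Pl.ord_one]

theorem poleOrd_of_ne_zero {a : K} (ha : a ≠ 0) : Pl.poleOrd v a = (-Pl.ord v a).toNat := by
  simp only [poleOrd, ordMinus, if_neg ha]
  omega

theorem poleOrd_add_le (a b : K) :
    Pl.poleOrd v (a + b) ≤ max (Pl.poleOrd v a) (Pl.poleOrd v b) := by
  rcases eq_or_ne a 0 with rfl | ha
  · simp
  rcases eq_or_ne b 0 with rfl | hb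
  · simp
  rcases eq_or_ne (a + b) 0 with hab | hab
  · simp [hab, poleOrd_zero]
  have := Pl.min_le_ord_add v a b ha hb hab
  simp only [Pl.poleOrd_of_ne_zero v ha, Pl.poleOrd_of_ne_zero v hb,
    Pl.poleOrd_of_ne_zero v hab]
  omega

theorem poleOrd_mul_le (a b : K) :
    Pl.poleOrd v (a * b) ≤ Pl.poleOrd v a + Pl.poleOrd v b := by
  rcases eq_or_ne a 0 with rfl | ha
  · simp [poleOrd_zero]
  rcases eq_or_ne b 0 with rfl | hb
  · simp [poleOrd_zero]
  have := Pl.ord_mul v a b ha hb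
  simp only [Pl.poleOrd_of_ne_zero v ha, Pl.poleOrd_of_ne_zero v hb,
    Pl.poleOrd_of_ne_zero v (mul_ne_zero ha hb)]
  omega

theorem poleOrd_sum_le {ι : Type*} {s : Finset ι} {f : ι → K} {B : ℕ}
    (h : ∀ t ∈ s, Pl.poleOrd v (f t) ≤ B) : Pl.poleOrd v (∑ t ∈ s, f t) ≤ B :=
  Finset.sum_induction f (fun a => Pl.poleOrd v a ≤ B)
    (fun a b ha hb => (Pl.poleOrd_add_le v a b).trans (max_le ha hb))
    (by simp [poleOrd_zero]) h

theorem hasFiniteSupport_poleOrd (a : K) : (fun v => Pl.poleOrd v a).HasFiniteSupport := by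
  rcases eq_or_ne a 0 with rfl | ha
  · simp [Function.HasFiniteSupport, poleOrd_zero]
  refine (Pl.finite_mulSupport a ha).subset fun v hv => ?_
  simp only [Function.mem_support, Pl.poleOrd_of_ne_zero v ha] at hv
  simp only [Set.mem_ofPred_eq]
  omega

theorem log_resCard_nonneg : 0 ≤ Real.log (Pl.resCard v) :=
  Real.log_nonneg (by exact_mod_cast one_le_two.trans (Pl.two_le_resCard v))

theorem h1_eq_finsum_poleOrd (a : K) :
    Pl.h1 a = ∑ᶠ v, (Pl.poleOrd v a : ℝ) * Real.log (Pl.resCard v) := by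
  rw [h1, ← finsum_neg_distrib]
  refine finsum_congr fun v => ?_
  have : Pl.ordMinus v a ≤ 0 := by
    unfold ordMinus; split_ifs <;> omega
  have hpole : (Pl.poleOrd v a : ℤ) = -Pl.ordMinus v a := Int.toNat_of_nonneg (by omega)
  rw [show (Pl.poleOrd v a : ℝ) = ((Pl.poleOrd v a : ℤ) : ℝ) by norm_cast, hpole]
  push_cast
  ring

theorem h1_nonneg (a : K) : 0 ≤ Pl.h1 a := by
  rw [h1_eq_finsum_poleOrd]
  exact finsum_nonneg fun v => mul_nonneg (Nat.cast_nonneg _) (Pl.log_resCard_nonneg v)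

theorem h1_le_of_poleOrd_le {ι : Type*} (s : Finset ι) (a : ι → K) (c : K) (e : ℕ)
    (h : ∀ v, Pl.poleOrd v c ≤ e * ∑ t ∈ s, Pl.poleOrd v (a t)) :
    Pl.h1 c ≤ e * ∑ t ∈ s, Pl.h1 (a t) := by
  have hfin : ∀ t,
      (fun v => (Pl.poleOrd v (a t) : ℝ) * Real.log (Pl.resCard v)).HasFiniteSupport :=
    fun t => ((Pl.hasFiniteSupport_poleOrd (a t)).comp Nat.cast_zero).fun_mul_left _
  simp only [h1_eq_finsum_poleOrd]
  rw [← finsum_sum_comm s _ fun t _ => hfin t, mul_finsum]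
  refine finsum_le_finsum' ?_ ?_ fun v => ?_
  · exact ((Pl.hasFiniteSupport_poleOrd c).comp Nat.cast_zero).fun_mul_left _
  · exact (Function.HasFiniteSupport.sum hfin s).fun_mul_right _
  · simp only [← Finset.sum_mul, ← mul_assoc]
    have := Pl.log_resCard_nonneg v
    gcongr
    exact_mod_cast h v

end PlaceData

section PoleBound

variable {σ : Type*}

def PlaceData.PoleBound (Pl : PlaceData K) (v : Pl.Pt) (b : ℕ) (f : MvPolynomial σ K) : Prop :=
  ∀ m, Pl.poleOrd v (coeff m f) ≤ b * m.degree

namespace PlaceData.PoleBound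

variable {Pl : PlaceData K} {v : Pl.Pt} {b c : ℕ}

theorem monomial_one (μ : σ →₀ ℕ) : Pl.PoleBound v b (monomial μ (1 : K)) := by
  classical
  intro m
  rw [coeff_monomial]
  split_ifs <;> simp [poleOrd_one, poleOrd_zero]

theorem sum {ι : Type*} {s : Finset ι} {f : ι → MvPolynomial σ K}
    (h : ∀ t ∈ s, Pl.PoleBound v b (f t)) : Pl.PoleBound v b (∑ t ∈ s, f t) := fun m => by
  rw [coeff_sum]
  exact Pl.poleOrd_sum_le v fun t ht => h t ht m

theorem mul {f g : MvPolynomial σ K} (hf : Pl.PoleBound v b f) (hg : Pl.PoleBound v b g) :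
    Pl.PoleBound v b (f * g) := fun m => by
  classical
  rw [coeff_mul]
  refine Pl.poleOrd_sum_le v fun q hq => ?_
  rw [Finset.HasAntidiagonal.mem_antidiagonal] at hq
  calc Pl.poleOrd v (coeff q.1 f * coeff q.2 g)
      ≤ Pl.poleOrd v (coeff q.1 f) + Pl.poleOrd v (coeff q.2 g) := Pl.poleOrd_mul_le v _ _
    _ ≤ b * q.1.degree + b * q.2.degree := add_le_add (hf _) (hg _)
    _ = b * m.degree := by rw [← hq, map_add, mul_add]

theorem prod {ι : Type*} {s : Finset ι} {f : ι → MvPolynomial σ K}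
    (h : ∀ t ∈ s, Pl.PoleBound v b (f t)) : Pl.PoleBound v b (∏ t ∈ s, f t) :=
  Finset.prod_induction f _ (fun _ _ => mul) (monomial_one 0) h

theorem pow {f : MvPolynomial σ K} (hf : Pl.PoleBound v b f) (e : ℕ) :
    Pl.PoleBound v b (f ^ e) := by
  simpa using prod (s := Finset.range e) fun _ _ => hf

/-- Multiplying by a constant costs only an additive `c` in the slope, since without
constant term every monomial has degree at least one. -/
theorem C_mul {f : MvPolynomial σ K} (hf : Pl.PoleBound v b f) (hf0 : constantCoeff f = 0)
    {a : K} (ha : Pl.poleOrd v a ≤ c) : Pl.PoleBound v (b + c) (C a * f) := by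
  intro m
  rw [coeff_C_mul]
  rcases eq_or_ne m 0 with rfl | hm
  · simp [← constantCoeff_eq, hf0, poleOrd_zero]
  have hdeg : 1 ≤ m.degree :=
    Nat.one_le_iff_ne_zero.2 ((Finsupp.degree_eq_zero_iff m).not.2 hm)
  calc Pl.poleOrd v (a * coeff m f) ≤ c + b * m.degree :=
        (Pl.poleOrd_mul_le v _ _).trans (add_le_add ha (hf m))
    _ ≤ (b + c) * m.degree := by nlinarith

end PlaceData.PoleBound

end PoleBound

section Substitution

variable {σ τ R : Type*} [CommSemiring R]

theorem MvPolynomial.constantCoeff_prod_pow_eq_zero {g : σ → MvPolynomial τ R}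
    (hg : ∀ i, constantCoeff (g i) = 0) {μ : σ →₀ ℕ} (hμ : μ ≠ 0) :
    constantCoeff (∏ i ∈ μ.support, g i ^ μ i) = 0 := by
  obtain ⟨i, hi⟩ := Finsupp.support_nonempty_iff.2 hμ
  rw [map_prod]
  exact Finset.prod_eq_zero hi (by rw [map_pow, hg, zero_pow (Finsupp.mem_support_iff.1 hi)])

theorem MvPolynomial.ne_zero_of_mem_support_of_constantCoeff_eq_zero {f : MvPolynomial σ R}
    (hf : constantCoeff f = 0) {μ : σ →₀ ℕ} (hμ : μ ∈ f.support) : μ ≠ 0 := by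
  rintro rfl
  exact mem_support_iff.1 hμ (by rwa [← constantCoeff_eq])

theorem MvPolynomial.constantCoeff_bind₁_eq_zero {g : σ → MvPolynomial τ R}
    (hg : ∀ i, constantCoeff (g i) = 0) {f : MvPolynomial σ R} (hf : constantCoeff f = 0) :
    constantCoeff (bind₁ g f) = 0 := by
  rw [f.as_sum, map_sum, map_sum]
  refine Finset.sum_eq_zero fun μ hμ => ?_
  rw [bind₁_monomial, map_mul,
    constantCoeff_prod_pow_eq_zero hg (ne_zero_of_mem_support_of_constantCoeff_eq_zero hf hμ),
    mul_zero]

theorem PlaceData.PoleBound.bind₁ {Pl : PlaceData K} {v : Pl.Pt} {b c : ℕ}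
    {g : σ → MvPolynomial τ K} (hg : ∀ i, Pl.PoleBound v b (g i))
    (hg0 : ∀ i, constantCoeff (g i) = 0) {f : MvPolynomial σ K} (hf0 : constantCoeff f = 0)
    (hf : ∀ μ, Pl.poleOrd v (coeff μ f) ≤ c) : Pl.PoleBound v (b + c) (bind₁ g f) := by
  rw [f.as_sum, map_sum]
  refine sum fun μ hμ => ?_
  rw [bind₁_monomial]
  exact C_mul (prod fun i _ => (hg i).pow _) (constantCoeff_prod_pow_eq_zero hg0
    (ne_zero_of_mem_support_of_constantCoeff_eq_zero hf0 hμ)) (hf μ)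

end Substitution

section Iterates

variable {d : ℕ}

theorem constantCoeff_polyIter {R : Type*} [CommSemiring R] {F : Fin d → MvPolynomial (Fin d) R}
    (hF : ∀ j, constantCoeff (F j) = 0) (n : ℕ) (j : Fin d) :
    constantCoeff (polyIter F n j) = 0 := by
  induction n generalizing j with
  | zero => exact constantCoeff_X (R := R) j
  | succ n ih => exact constantCoeff_bind₁_eq_zero ih (hF j)

theorem PlaceData.poleBound_polyIter (Pl : PlaceData K) (v : Pl.Pt)
    {F : Fin d → MvPolynomial (Fin d) K} (hF0 : ∀ j, constantCoeff (F j) = 0) {b : ℕ}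
    (hF : ∀ j μ, Pl.poleOrd v (coeff μ (F j)) ≤ b) (n : ℕ) (j : Fin d) :
    Pl.PoleBound v (n * b) (polyIter F n j) := by
  induction n generalizing j with
  | zero => exact PoleBound.monomial_one (Finsupp.single j 1)
  | succ n ih =>
    rw [Nat.succ_mul]
    exact PoleBound.bind₁ ih (constantCoeff_polyIter hF0 n) (hF0 j) (hF j)

theorem PlaceData.h1_coeff_polyIter_le (Pl : PlaceData K) {F : Fin d → MvPolynomial (Fin d) K}
    (hF0 : ∀ j, constantCoeff (F j) = 0) (n : ℕ) (j : Fin d) (m : Fin d →₀ ℕ) :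
    Pl.h1 (coeff m (polyIter F n j)) ≤
      (n * m.degree : ℕ) * ∑ t ∈ Finset.univ.sigma fun i => (F i).support,
        Pl.h1 (coeff t.2 (F t.1)) := by
  refine Pl.h1_le_of_poleOrd_le _ _ _ _ fun v => ?_
  have hF : ∀ i μ, Pl.poleOrd v (coeff μ (F i)) ≤
      ∑ t ∈ Finset.univ.sigma fun i => (F i).support, Pl.poleOrd v (coeff t.2 (F t.1)) := by
    intro i μ
    by_cases hμ : μ ∈ (F i).support
    · exact Finset.single_le_sum (f := fun t : (_ : Fin d) × (Fin d →₀ ℕ) =>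
        Pl.poleOrd v (coeff t.2 (F t.1))) (fun _ _ => Nat.zero_le _) (a := ⟨i, μ⟩)
        (Finset.mem_sigma.2 ⟨Finset.mem_univ i, hμ⟩)
    · rw [notMem_support_iff.1 hμ, poleOrd_zero]
      exact Nat.zero_le _
  calc Pl.poleOrd v (coeff m (polyIter F n j)) ≤ _ * m.degree :=
        Pl.poleBound_polyIter v hF0 hF n j m
    _ = _ := by ring

end Iterates

theorem IsAddPoly.constantCoeff_eq_zero {p : ℕ} (hp : p ≠ 0) {R : Type*} [CommSemiring R]
    {d : ℕ} {f : MvPolynomial (Fin d) R} (hf : IsAddPoly p f) : constantCoeff f = 0 := by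
  obtain ⟨r, a, rfl⟩ := hf
  simp [hp]

theorem eventually_natCast_mul_pow_mul_le_pow {s t : ℝ} (hs : 0 ≤ s) (hst : s < t) (H : ℝ) :
    ∀ᶠ n : ℕ in atTop, n * s ^ n * H ≤ t ^ n := by
  have ht : 0 < t := hs.trans_lt hst
  have hlim : Tendsto (fun n : ℕ => n * (s / t) ^ n * H) atTop (nhds 0) := by
    simpa using (tendsto_self_mul_const_pow_of_lt_one (div_nonneg hs ht.le)
      ((div_lt_one ht).2 hst)).mul_const H
  filter_upwards [hlim.eventually (gt_mem_nhds zero_lt_one)] with n hn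
  calc (n : ℝ) * s ^ n * H = n * (s / t) ^ n * H * t ^ n := by
        rw [div_pow]; field_simp
    _ ≤ 1 * t ^ n := by gcongr
    _ = t ^ n := one_mul _

theorem monomial_coefficient_height_bound_general
    {K : Type*} [Field K] (Pl : PlaceData K) (p d : ℕ) (hp : p.Prime)
    (F : Fin d → MvPolynomial (Fin d) K) (hFadd : ∀ j, IsAddPoly p (F j))
    (s splus : ℝ) (hs : 1 ≤ s) (hss : s < splus) :
    ∃ N₀ : ℕ, ∀ n ≥ N₀, ∀ j : Fin d, ∀ m : Fin d →₀ ℕ,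
      coeff m (polyIter F n j) ≠ 0 →
      (((m.sum fun _ e => e : ℕ)) : ℝ) ≤ s ^ n →
      Pl.h1 (coeff m (polyIter F n j)) ≤ splus ^ n := by
  have hF0 : ∀ j, constantCoeff (F j) = 0 := fun j => (hFadd j).constantCoeff_eq_zero hp.ne_zero
  set H := ∑ t ∈ Finset.univ.sigma fun i => (F i).support, Pl.h1 (coeff t.2 (F t.1))
  have hH : 0 ≤ H := Finset.sum_nonneg fun t _ => Pl.h1_nonneg _
  obtain ⟨N₀, hN₀⟩ := eventually_atTop.1
    (eventually_natCast_mul_pow_mul_le_pow (zero_le_one.trans hs) hss H)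
  refine ⟨N₀, fun n hn j m _ hdeg => ?_⟩
  calc Pl.h1 (coeff m (polyIter F n j)) ≤ (n * m.degree : ℕ) * H :=
        Pl.h1_coeff_polyIter_le hF0 n j m
    _ ≤ n * s ^ n * H := by
        push_cast
        gcongr
        exact hdeg
    _ ≤ splus ^ n := hN₀ n hn

/-- Lemma 5 of the paper. Let `F` be a nonzero additive polynomial self-map
of `K^d` and `1 ≤ s < splus` real numbers. For all sufficiently large `n`, every monomial
occurring in a component of `F^{∘n}` of total degree at most `s^n` has coefficient of
height at most `splus^n`. -/
theorem monomial_coefficient_height_bound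
    {K : Type*} [Field K] (Pl : PlaceData K) (p d : ℕ) (hp : p.Prime) [CharP K p]
    (F : Fin d → MvPolynomial (Fin d) K) (hFadd : ∀ j, IsAddPoly p (F j)) (hFne : F ≠ 0)
    (s splus : ℝ) (hs : 1 ≤ s) (hss : s < splus) :
    ∃ N₀ : ℕ, ∀ n ≥ N₀, ∀ j : Fin d, ∀ m : Fin d →₀ ℕ,
      coeff m (polyIter F n j) ≠ 0 →
      (((m.sum fun _ e => e : ℕ)) : ℝ) ≤ s ^ n →
      Pl.h1 (coeff m (polyIter F n j)) ≤ splus ^ n :=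
  monomial_coefficient_height_bound_general Pl p d hp F hFadd s splus hs hss

end
end

section
/- Let F be a polynomial self-map of affine d-space over a field K such that deg F^{∘n} ≥ 1 for all n ∈ ℕ, let δ := lim_{n→∞}(deg F^{∘n})^{1/n} be its dynamic degree and κ = κ(F) its saturation degree. Then δ^{1/d} ≤ κ ≤ δ. -/
open MvPolynomial Filter

noncomputable section

variable {K : Type*} [Field K]

/-!
Write `D n = deg F^{∘n}`, so that `D 0 ≤ 1`, `D (n + 1) ≤ deg F * D n` and `D n ≈ δ ^ n`.

Lower bound: pick for every `n` a coordinate of `F^{∘n}` of degree `D n`. Since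
`D N ≤ deg F * ∑_{n<N} D n + 1`, every `t ≤ deg F * ∑_{n<N} D n` is a sum `∑ e n * D n` with
digits `e n ≤ deg F`, so for `L = deg F + 1` the products `∏_n Ψ_{i_n, n, e n}` take every such
total degree. Polynomials of distinct total degrees are linearly independent, so the span has
dimension at least `D N`, which eventually exceeds `c ^ (d N)` as soon as `c ^ d < δ`.

Upper bound: for `y > δ` every product has total degree `O(N y ^ N)`, and polynomials in `d`
variables of degree at most `B` span a space of dimension at most `(B + 1) ^ d`. Hence
`c ^ (d N) < (A N y ^ N) ^ d` eventually, which forces `c ≤ y`.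
-/

namespace MvPolynomial

variable {σ R : Type*}

theorem totalDegree_bind₁_le [CommSemiring R] {τ : Type*} (g : σ → MvPolynomial τ R)
    (f : MvPolynomial σ R) {B : ℕ} (hg : ∀ i, (g i).totalDegree ≤ B) :
    (bind₁ g f).totalDegree ≤ f.totalDegree * B := by
  classical
  conv_lhs => rw [f.as_sum, map_sum]
  refine (totalDegree_finsetSum _ _).trans (Finset.sup_le fun v hv => ?_)
  rw [bind₁_monomial]
  calc (C (coeff v f) * ∏ i ∈ v.support, g i ^ v i).totalDegree
      ≤ ∑ i ∈ v.support, (g i ^ v i).totalDegree := by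
        refine (totalDegree_mul _ _).trans ?_
        rw [totalDegree_C, zero_add]
        exact totalDegree_finsetProd _ _
    _ ≤ ∑ i ∈ v.support, v i * B :=
        Finset.sum_le_sum fun i _ => (totalDegree_pow _ _).trans (Nat.mul_le_mul_left _ (hg i))
    _ = (v.sum fun _ e => e) * B := by rw [Finsupp.sum, Finset.sum_mul]
    _ ≤ f.totalDegree * B := Nat.mul_le_mul_right _ (le_totalDegree hv)

theorem homogeneousComponent_totalDegree_ne_zero [CommSemiring R] {p : MvPolynomial σ R}
    (hp : p ≠ 0) :
    homogeneousComponent p.totalDegree p ≠ 0 := by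
  obtain ⟨v, hv, hvdeg⟩ := Finset.exists_mem_eq_sup p.support (support_nonempty.mpr hp)
    fun v => v.sum fun _ e => e
  refine ne_of_apply_ne (coeff v) ?_
  rw [coeff_homogeneousComponent, if_pos (by rw [totalDegree, hvdeg, Finsupp.degree]; rfl)]
  exact mem_support_iff.mp hv

section IsDomain

variable [CommRing R] [IsDomain R]

theorem totalDegree_pow_of_isDomain {p : MvPolynomial σ R} (hp : p ≠ 0) (n : ℕ) :
    (p ^ n).totalDegree = n * p.totalDegree := by
  induction n with
  | zero => simp
  | succ n ih => rw [pow_succ, totalDegree_mul_of_isDomain (pow_ne_zero _ hp) hp, ih]; ring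

theorem totalDegree_prod_of_isDomain {ι : Type*} (s : Finset ι) {f : ι → MvPolynomial σ R}
    (hf : ∀ i ∈ s, f i ≠ 0) : (∏ i ∈ s, f i).totalDegree = ∑ i ∈ s, (f i).totalDegree := by
  induction s using Finset.cons_induction with
  | empty => simp
  | cons a s ha ih =>
    rw [Finset.forall_mem_cons] at hf
    rw [Finset.prod_cons, Finset.sum_cons,
      totalDegree_mul_of_isDomain hf.1 (Finset.prod_ne_zero_iff.mpr hf.2), ih hf.2]

theorem linearIndependent_of_injective_totalDegree {ι : Type*} {f : ι → MvPolynomial σ R}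
    (hf : ∀ i, f i ≠ 0) (hinj : Function.Injective fun i => (f i).totalDegree) :
    LinearIndependent R f := by
  classical
  refine linearIndependent_iff'.mpr fun s g hsum i hi => by_contra fun hgi => ?_
  obtain ⟨i₀, hi₀, hmax⟩ := Finset.exists_max_image (s.filter (g · ≠ 0))
    (fun j => (f j).totalDegree) ⟨i, Finset.mem_filter.mpr ⟨hi, hgi⟩⟩
  rw [Finset.mem_filter] at hi₀
  -- only `i₀` survives in the top homogeneous component of `f i₀`
  have key := congrArg (homogeneousComponent (f i₀).totalDegree) hsum
  rw [map_sum, map_zero, Finset.sum_eq_single_of_mem i₀ hi₀.1] at key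
  · rw [map_smul, smul_eq_C_mul] at key
    exact mul_ne_zero (C_ne_zero.mpr hi₀.2) (homogeneousComponent_totalDegree_ne_zero (hf i₀)) key
  · intro j hj hji₀
    by_cases hgj : g j = 0
    · rw [hgj, zero_smul, map_zero]
    · have hlt : (f j).totalDegree < (f i₀).totalDegree :=
        (hmax j (Finset.mem_filter.mpr ⟨hj, hgj⟩)).lt_of_ne fun h => hji₀ (hinj h)
      rw [map_smul, homogeneousComponent_eq_zero _ _ hlt, smul_zero]

end IsDomain

theorem finrank_restrictDegree_le [Fintype σ] (B : ℕ) :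
    Module.finrank K (restrictDegree σ K B) ≤ (B + 1) ^ Fintype.card σ := by
  classical
  let φ : (σ → Fin (B + 1)) → MvPolynomial σ K := fun v =>
    monomial (Finsupp.equivFunOnFinite.symm fun i => (v i : ℕ)) 1
  have hle : restrictDegree σ K B ≤ Submodule.span K (Set.range φ) := by
    rw [restrictDegree, restrictSupport_eq_span, Submodule.span_le]
    rintro _ ⟨m, hm, rfl⟩
    exact Submodule.subset_span ⟨fun i => ⟨m i, Nat.lt_succ_of_le (hm i)⟩, by simp [φ]⟩
  have := FiniteDimensional.span_of_finite K (Set.finite_range φ)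
  calc Module.finrank K (restrictDegree σ K B) ≤ (Set.range φ).finrank K :=
        Submodule.finrank_mono hle
    _ ≤ Fintype.card (σ → Fin (B + 1)) := finrank_range_le_card φ
    _ = (B + 1) ^ Fintype.card σ := by simp

theorem add_one_le_finrank_of_forall_exists_totalDegree_eq {S : Set (MvPolynomial σ K)}
    (hS : S.Finite) {T : ℕ} (h : ∀ t ≤ T, ∃ p ∈ S, p ≠ 0 ∧ p.totalDegree = t) :
    T + 1 ≤ S.finrank K := by
  choose P hPS hP0 hPdeg using fun t : Fin (T + 1) => h t (Nat.lt_succ_iff.mp t.isLt)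
  have hli : LinearIndependent K P :=
    linearIndependent_of_injective_totalDegree hP0 fun a b hab =>
      Fin.ext (by simpa [hPdeg] using hab)
  have := FiniteDimensional.span_of_finite K hS
  calc T + 1 = (Set.range P).finrank K := by
        rw [Set.finrank, finrank_span_eq_card hli, Fintype.card_fin]
    _ ≤ S.finrank K := Submodule.finrank_mono (Submodule.span_mono (Set.range_subset_iff.mpr hPS))

end MvPolynomial

open Finset

theorem exists_forall_le_and_sum_mul_eq {D : ℕ → ℕ} {M : ℕ}
    (hD : ∀ N, D N ≤ M * ∑ n ∈ range N, D n + 1) (N : ℕ) {t : ℕ}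
    (ht : t ≤ M * ∑ n ∈ range N, D n) :
    ∃ e : ℕ → ℕ, (∀ n, e n ≤ M) ∧ ∑ n ∈ range N, e n * D n = t := by
  induction N generalizing t with
  | zero => exact ⟨0, fun _ => Nat.zero_le _, by simp_all⟩
  | succ N ih =>
    -- take the top digit as large as possible; the remainder is then small enough for `ih`
    set q := min M (t / D N)
    have hq : q * D N ≤ t :=
      (Nat.mul_le_mul_right _ (min_le_right _ _)).trans (Nat.div_mul_le_self _ _)
    have hrest : t - q * D N ≤ M * ∑ n ∈ range N, D n := by
      rw [sum_range_succ, mul_add] at ht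
      obtain hqM | hqt : q = M ∨ q = t / D N := min_choice _ _
      · rw [hqM]; omega
      · rcases (D N).eq_zero_or_pos with h0 | h0
        · rw [h0] at ht ⊢; omega
        · have := Nat.mod_lt t h0
          have := Nat.div_add_mod' t (D N)
          have := hD N
          rw [hqt]; omega
    obtain ⟨e, he, hsum⟩ := ih hrest
    refine ⟨fun n => if n = N then q else e n, fun n => ?_, ?_⟩
    · dsimp only; split_ifs
      exacts [min_le_left _ _, he n]
    · dsimp only
      rw [sum_range_succ, if_pos rfl,
        sum_congr rfl fun n hn => by rw [if_neg (mem_range.mp hn).ne], hsum]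
      omega

theorem eventually_pow_lt_of_tendsto_rpow {u : ℕ → ℝ} {δ x : ℝ} (hu : ∀ n, 0 ≤ u n)
    (h : Tendsto (fun n : ℕ => u n ^ (n : ℝ)⁻¹) atTop (nhds δ)) (hx0 : 0 ≤ x) (hx : x < δ) :
    ∀ᶠ n in atTop, x ^ n < u n := by
  filter_upwards [h.eventually_const_lt hx, eventually_ne_atTop 0] with n hn hn0
  simpa [Real.rpow_inv_natCast_pow (hu n) hn0] using pow_lt_pow_left₀ hn hx0 hn0

theorem eventually_lt_pow_of_tendsto_rpow {u : ℕ → ℝ} {δ y : ℝ} (hu : ∀ n, 0 ≤ u n)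
    (h : Tendsto (fun n : ℕ => u n ^ (n : ℝ)⁻¹) atTop (nhds δ)) (hy : δ < y) :
    ∀ᶠ n in atTop, u n < y ^ n := by
  filter_upwards [h.eventually_lt_const hy, eventually_ne_atTop 0] with n hn hn0
  simpa [Real.rpow_inv_natCast_pow (hu n) hn0] using
    pow_lt_pow_left₀ hn (Real.rpow_nonneg (hu n) _) hn0

theorem exists_forall_le_mul_pow_of_tendsto_rpow {u : ℕ → ℝ} {δ y : ℝ} (hu : ∀ n, 0 ≤ u n)
    (h : Tendsto (fun n : ℕ => u n ^ (n : ℝ)⁻¹) atTop (nhds δ)) (hy : δ < y) :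
    ∃ C, 0 ≤ C ∧ ∀ n, u n ≤ C * y ^ n := by
  have hy0 : 0 < y := (ge_of_tendsto' h fun n => Real.rpow_nonneg (hu n) _).trans_lt hy
  have hbdd : BddAbove (Set.range fun n => u n / y ^ n) := by
    refine IsBoundedUnder.bddAbove_range ⟨1, eventually_map.mpr ?_⟩
    filter_upwards [eventually_lt_pow_of_tendsto_rpow hu h hy] with n hn
    exact (div_le_one (pow_pos hy0 n)).mpr hn.le
  obtain ⟨C, hC⟩ := hbdd
  refine ⟨C, (div_nonneg (hu 0) (pow_nonneg hy0.le 0)).trans (hC ⟨0, rfl⟩), fun n => ?_⟩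
  rw [← div_le_iff₀ (pow_pos hy0 n)]
  exact hC ⟨n, rfl⟩

theorem le_of_eventually_pow_lt_mul_pow {c y A : ℝ} (hy : 0 < y)
    (h : ∀ᶠ N : ℕ in atTop, c ^ N < A * N * y ^ N) : c ≤ y := by
  by_contra! hyc
  have hr : 1 < c / y := (one_lt_div hy).mpr hyc
  have hlim : Tendsto (fun N : ℕ => A * ((N : ℝ) ^ 1 / (c / y) ^ N)) atTop (nhds 0) := by
    simpa using (tendsto_pow_const_div_const_pow_of_one_lt 1 hr).const_mul A
  obtain ⟨N, hN, hsmall⟩ := (h.and (hlim.eventually_lt_const one_pos)).exists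
  have hpow : 0 < (c / y) ^ N := pow_pos (div_pos (hy.trans hyc) hy) N
  rw [pow_one, ← mul_div_assoc, div_lt_one hpow, div_pow, lt_div_iff₀ (pow_pos hy N)] at hsmall
  linarith

section PolyDeg

variable {R : Type*} [CommSemiring R] {d e : ℕ}

theorem totalDegree_le_polyDeg (G : Fin e → MvPolynomial (Fin d) R) (j : Fin e) :
    (G j).totalDegree ≤ polyDeg G :=
  le_sup (f := fun j => (G j).totalDegree) (mem_univ j)

theorem exists_totalDegree_eq_polyDeg {G : Fin e → MvPolynomial (Fin d) R} (hG : 0 < polyDeg G) :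
    ∃ j, (G j).totalDegree = polyDeg G := by
  obtain ⟨j, -, -⟩ := Finset.lt_sup_iff.mp hG
  obtain ⟨i, -, hi⟩ := exists_mem_eq_sup univ ⟨j, mem_univ j⟩ fun j => (G j).totalDegree
  exact ⟨i, hi.symm⟩

variable (F : Fin d → MvPolynomial (Fin d) R)

theorem polyDeg_polyIter_zero_le : polyDeg (polyIter F 0) ≤ 1 :=
  Finset.sup_le fun j _ => (totalDegree_monomial_le _ _).trans (by simp)

theorem polyDeg_polyIter_succ_le (n : ℕ) :
    polyDeg (polyIter F (n + 1)) ≤ polyDeg F * polyDeg (polyIter F n) :=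
  Finset.sup_le fun j _ => (totalDegree_bind₁_le _ _ (totalDegree_le_polyDeg _)).trans
    (Nat.mul_le_mul_right _ (totalDegree_le_polyDeg F j))

theorem polyDeg_polyIter_le_mul_sum_add_one (N : ℕ) :
    polyDeg (polyIter F N) ≤ polyDeg F * ∑ n ∈ range N, polyDeg (polyIter F n) + 1 := by
  cases N with
  | zero => simpa using polyDeg_polyIter_zero_le F
  | succ N =>
    refine (polyDeg_polyIter_succ_le F N).trans (Nat.le_succ_of_le (Nat.mul_le_mul_left _ ?_))
    exact single_le_sum (f := fun n => polyDeg (polyIter F n)) (fun n _ => Nat.zero_le _)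
      (self_mem_range_succ N)

theorem one_le_of_tendsto_polyDeg_polyIter (hdeg : ∀ n : ℕ, 1 ≤ polyDeg (polyIter F n)) {δ : ℝ}
    (hδ : Tendsto (fun n : ℕ => ((polyDeg (polyIter F n) : ℝ)) ^ ((n : ℝ)⁻¹)) atTop (nhds δ)) :
    1 ≤ δ :=
  ge_of_tendsto' hδ fun n => Real.one_le_rpow (by exact_mod_cast hdeg n) (by positivity)

end PolyDeg

section SatRank

variable {d : ℕ} (F : Fin d → MvPolynomial (Fin d) K)

def satGen (L N : ℕ) (s : Finset (Fin d × Fin N × Fin L)) : MvPolynomial (Fin d) K :=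
  ∏ t ∈ s, polyIter F t.2.1 t.1 ^ (t.2.2 : ℕ)

theorem satRank_eq_finrank (L N : ℕ) : satRank F L N = (Set.range (satGen F L N)).finrank K :=
  rfl

def satRates : Set ℝ :=
  {c | 0 < c ∧ ∃ L : ℕ, ∀ᶠ N : ℕ in atTop, (c ^ (d * N) : ℝ) < (satRank F L N : ℝ)}

theorem satDeg_eq_sSup_satRates : satDeg F = sSup (satRates F) :=
  rfl

theorem mul_sum_polyDeg_add_one_le_satRank (hdeg : ∀ n : ℕ, 1 ≤ polyDeg (polyIter F n)) (N : ℕ) :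
    polyDeg F * ∑ n ∈ range N, polyDeg (polyIter F n) + 1 ≤ satRank F (polyDeg F + 1) N := by
  rw [satRank_eq_finrank]
  refine add_one_le_finrank_of_forall_exists_totalDegree_eq (Set.finite_range _) fun t ht => ?_
  choose i hi using fun n => exists_totalDegree_eq_polyDeg (hdeg n)
  have hne : ∀ n, polyIter F n (i n) ≠ 0 := fun n h0 => by
    simpa [← hi n, h0] using hdeg n
  obtain ⟨e, he, hsum⟩ :=
    exists_forall_le_and_sum_mul_eq (polyDeg_polyIter_le_mul_sum_add_one F) N ht
  -- the subset `{(i n, n, e n) : n < N}` realises the degree `∑ e n * deg F^{∘n} = t`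
  have hgen : satGen F (polyDeg F + 1) N
      (univ.image fun n : Fin N => (i n, n, ⟨e n, Nat.lt_succ_of_le (he n)⟩)) =
      ∏ n : Fin N, polyIter F n (i n) ^ e n :=
    prod_image fun a _ b _ hab => congrArg (fun t => t.2.1) hab
  have hne' : ∀ n ∈ (univ : Finset (Fin N)), polyIter F n (i n) ^ e n ≠ 0 :=
    fun n _ => pow_ne_zero _ (hne n)
  refine ⟨_, ⟨_, hgen⟩, prod_ne_zero_iff.mpr hne', ?_⟩
  simp_rw [totalDegree_prod_of_isDomain _ hne', totalDegree_pow_of_isDomain (hne _), hi]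
  rw [Fin.sum_univ_eq_sum_range (fun n => e n * polyDeg (polyIter F n)), hsum]

theorem polyDeg_polyIter_le_satRank (hdeg : ∀ n : ℕ, 1 ≤ polyDeg (polyIter F n)) (N : ℕ) :
    polyDeg (polyIter F N) ≤ satRank F (polyDeg F + 1) N :=
  (polyDeg_polyIter_le_mul_sum_add_one F N).trans (mul_sum_polyDeg_add_one_le_satRank F hdeg N)

theorem totalDegree_satGen_le (L N : ℕ) (s : Finset (Fin d × Fin N × Fin L)) :
    (satGen F L N s).totalDegree ≤ L * d * L * ∑ n ∈ range N, polyDeg (polyIter F n) := by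
  calc (satGen F L N s).totalDegree
      ≤ ∑ t ∈ s, (polyIter F t.2.1 t.1 ^ (t.2.2 : ℕ)).totalDegree :=
        totalDegree_finsetProd _ _
    _ ≤ ∑ t ∈ s, L * polyDeg (polyIter F t.2.1) := by
        refine sum_le_sum fun t _ => (totalDegree_pow _ _).trans ?_
        exact Nat.mul_le_mul t.2.2.isLt.le (totalDegree_le_polyDeg _ _)
    _ ≤ ∑ t : Fin d × Fin N × Fin L, L * polyDeg (polyIter F t.2.1) :=
        sum_le_sum_of_subset (subset_univ s)
    _ = L * d * L * ∑ n ∈ range N, polyDeg (polyIter F n) := by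
        simp only [← mul_sum, Fintype.sum_prod_type, sum_const, card_univ, Fintype.card_fin,
          smul_eq_mul, Fin.sum_univ_eq_sum_range (fun n => polyDeg (polyIter F n))]
        ring

theorem satRank_le (L N : ℕ) :
    satRank F L N ≤ (L * d * L * ∑ n ∈ range N, polyDeg (polyIter F n) + 1) ^ d := by
  set B := L * d * L * ∑ n ∈ range N, polyDeg (polyIter F n)
  have hspan : Submodule.span K (Set.range (satGen F L N)) ≤ restrictDegree (Fin d) K B :=
    Submodule.span_le.mpr <| Set.range_subset_iff.mpr fun s =>
      restrictTotalDegree_le_restrictDegree _ _ _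
        ((mem_restrictTotalDegree _ _ _).mpr (totalDegree_satGen_le F L N s))
  calc satRank F L N ≤ Module.finrank K (restrictDegree (Fin d) K B) := Submodule.finrank_mono hspan
    _ ≤ (B + 1) ^ d := by simpa using finrank_restrictDegree_le (σ := Fin d) (K := K) B

variable {F} {δ : ℝ}

theorem exists_eventually_satRank_le
    (hδ : Tendsto (fun n : ℕ => ((polyDeg (polyIter F n) : ℝ)) ^ ((n : ℝ)⁻¹)) atTop (nhds δ))
    {y : ℝ} (hy : δ < y) (hy1 : 1 ≤ y) (L : ℕ) :
    ∃ A > 0, ∀ᶠ N : ℕ in atTop, (satRank F L N : ℝ) ≤ (A * N * y ^ N) ^ d := by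
  obtain ⟨C, hC0, hC⟩ :=
    exists_forall_le_mul_pow_of_tendsto_rpow (fun n => Nat.cast_nonneg _) hδ hy
  refine ⟨L * d * L * C + 1, by positivity, ?_⟩
  filter_upwards [eventually_ge_atTop 1] with N hN
  have hsum : ((∑ n ∈ range N, polyDeg (polyIter F n) : ℕ) : ℝ) ≤ N * (C * y ^ N) := by
    push_cast
    calc _ ≤ ∑ n ∈ range N, C * y ^ N := sum_le_sum fun n hn => (hC n).trans
          (mul_le_mul_of_nonneg_left (pow_le_pow_right₀ hy1 (mem_range.mp hn).le) hC0)
      _ = N * (C * y ^ N) := by simp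
  have hNy : (1 : ℝ) ≤ N * y ^ N :=
    one_le_mul_of_one_le_of_one_le (by exact_mod_cast hN) (one_le_pow₀ hy1)
  calc (satRank F L N : ℝ)
      ≤ (((L * d * L * ∑ n ∈ range N, polyDeg (polyIter F n) + 1 : ℕ) : ℝ)) ^ d := by
        exact_mod_cast satRank_le F L N
    _ ≤ ((L * d * L * C + 1) * N * y ^ N) ^ d := by
        refine pow_le_pow_left₀ (by positivity) ?_ d
        push_cast at hsum ⊢
        nlinarith [mul_le_mul_of_nonneg_left hsum (by positivity : (0 : ℝ) ≤ L * d * L)]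

theorem le_of_mem_satRates
    (hδ : Tendsto (fun n : ℕ => ((polyDeg (polyIter F n) : ℝ)) ^ ((n : ℝ)⁻¹)) atTop (nhds δ))
    (hδ1 : 1 ≤ δ) {c : ℝ} (hc : c ∈ satRates F) : c ≤ δ := by
  obtain ⟨-, L, hL⟩ := hc
  refine le_of_forall_gt_imp_ge_of_dense fun y hy => ?_
  have hy0 : 0 < y := by linarith
  obtain ⟨A, hA, hAL⟩ := exists_eventually_satRank_le hδ hy (hδ1.trans hy.le) L
  refine le_of_eventually_pow_lt_mul_pow (A := A) hy0 ?_
  filter_upwards [hL, hAL] with N hN hAN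
  refine lt_of_pow_lt_pow_left₀ d (by positivity) ?_
  rw [← pow_mul, mul_comm]
  exact hN.trans_le hAN

theorem Ioo_subset_satRates
    (hδ : Tendsto (fun n : ℕ => ((polyDeg (polyIter F n) : ℝ)) ^ ((n : ℝ)⁻¹)) atTop (nhds δ))
    (hdeg : ∀ n : ℕ, 1 ≤ polyDeg (polyIter F n)) :
    Set.Ioo 0 (δ ^ (d : ℝ)⁻¹) ⊆ satRates F := by
  obtain ⟨j, -⟩ := exists_totalDegree_eq_polyDeg (hdeg 0)
  have hδ0 : 0 ≤ δ := zero_le_one.trans (one_le_of_tendsto_polyDeg_polyIter F hdeg hδ)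
  rintro c ⟨hc0, hc⟩
  have hcd : c ^ d < δ := by
    simpa [Real.rpow_inv_natCast_pow hδ0 j.pos.ne'] using pow_lt_pow_left₀ hc hc0.le j.pos.ne'
  refine ⟨hc0, polyDeg F + 1, ?_⟩
  filter_upwards [eventually_pow_lt_of_tendsto_rpow (fun n => Nat.cast_nonneg _) hδ
    (by positivity) hcd] with N hN
  rw [pow_mul]
  exact hN.trans_le (by exact_mod_cast polyDeg_polyIter_le_satRank F hdeg N)

end SatRank

theorem dyn_deg_root_le_sat_deg_le_dyn_deg_general
    {K : Type*} [Field K] (d : ℕ)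
    (F : Fin d → MvPolynomial (Fin d) K)
    (hdeg : ∀ n : ℕ, 1 ≤ polyDeg (polyIter F n))
    (δ : ℝ)
    (hδ : Tendsto (fun n : ℕ => ((polyDeg (polyIter F n) : ℝ)) ^ ((n : ℝ)⁻¹))
      atTop (nhds δ)) :
    δ ^ ((d : ℝ)⁻¹) ≤ satDeg F ∧ satDeg F ≤ δ := by
  rw [satDeg_eq_sSup_satRates]
  have hδ1 : 1 ≤ δ := one_le_of_tendsto_polyDeg_polyIter F hdeg hδ
  have hle : ∀ c ∈ satRates F, c ≤ δ := fun c => le_of_mem_satRates hδ hδ1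
  have hpos : 0 < δ ^ (d : ℝ)⁻¹ := Real.rpow_pos_of_pos (by linarith) _
  refine ⟨?_, Real.sSup_le hle (by linarith)⟩
  calc δ ^ (d : ℝ)⁻¹ = sSup (Set.Ioo 0 (δ ^ (d : ℝ)⁻¹)) := (csSup_Ioo hpos).symm
    _ ≤ sSup (satRates F) := csSup_le_csSup ⟨δ, hle⟩ (Set.nonempty_Ioo.mpr hpos)
        (Ioo_subset_satRates hδ hdeg)

/-- section 6.1 of the paper. For a polynomial self-map `F` of affine
`d`-space over a field `K` with `deg F^{∘n} ≥ 1` for all `n`, the saturation degree lies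
between `δ^{1/d}` and `δ`, where `δ = lim_n (deg F^{∘n})^{1/n}` is the dynamic degree. -/
theorem dyn_deg_root_le_sat_deg_le_dyn_deg
    {K : Type*} [Field K] (d : ℕ) (hd : 0 < d)
    (F : Fin d → MvPolynomial (Fin d) K)
    (hdeg : ∀ n : ℕ, 1 ≤ polyDeg (polyIter F n))
    (δ : ℝ)
    (hδ : Tendsto (fun n : ℕ => ((polyDeg (polyIter F n) : ℝ)) ^ ((n : ℝ)⁻¹))
      atTop (nhds δ)) :
    δ ^ ((d : ℝ)⁻¹) ≤ satDeg F ∧ satDeg F ≤ δ :=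
  dyn_deg_root_le_sat_deg_le_dyn_deg_general d F hdeg δ hδ
end
end

section
/- Let K be a field and F = (f_1(x_1),…,f_d(x_d)) : 𝔸^d → 𝔸^d, where f_1,…,f_d ∈ K[x] are univariate polynomials of degrees q_j := deg f_j > 0. Then the saturation degree of F equals κ(F) = (q_1 ⋯ q_d)^{1/d}, whereas the dynamic degree equals δ = max_{1≤j≤d} q_j. -/
open MvPolynomial Filter

noncomputable section

variable {K : Type*} [Field K]

/-!
The `n`-th iterate of a split map is `(f_1^{∘n}(x_1), …, f_d^{∘n}(x_d))`, so
`deg F^{∘n} = (max_j q_j)^n`. For the saturation degree, `satRank F L N` is squeezed between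
`∏_j q_j^N` and a polynomial in `N` times `∏_j q_j^N`, which forces `κ^d = ∏_j q_j`.
From below: writing `a < q_j^N` in base `q_j`, the product `∏_n (f_j^{∘n})^{a_n}` is one of the
products of the family and has degree exactly `a` in `x_j`. Taking one such product per
coordinate gives `∏_j q_j^N` elements of the span, linearly independent because a Kronecker
substitution `x_j ↦ t^{w_j}` sends them to univariate polynomials of distinct degrees.
From above: every product of the family has degree at most `d N L² q_j^N` in `x_j`, and the
polynomials with these degree bounds form a space of dimension `∏_j (d N L² q_j^N + 1)`.
-/
namespace MvPolynomial

variable {R σ : Type*} [CommSemiring R]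

theorem toMvPolynomial_eq_sum_monomial (i : σ) (p : Polynomial R) :
    p.toMvPolynomial i = ∑ n ∈ p.support, monomial (Finsupp.single i n) (p.coeff n) := by
  conv_lhs => rw [p.as_sum_support]
  simp [Polynomial.toMvPolynomial, C_mul_X_pow_eq_monomial]

theorem support_toMvPolynomial_subset [DecidableEq σ] (i : σ) (p : Polynomial R) :
    (p.toMvPolynomial i).support ⊆ p.support.image (Finsupp.single i) := by
  rw [toMvPolynomial_eq_sum_monomial]
  refine support_sum.trans (Finset.biUnion_subset.mpr fun n hn => ?_)
  exact support_monomial_subset.trans (by simpa using Finset.mem_image_of_mem _ hn)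

theorem coeff_single_toMvPolynomial (i : σ) (p : Polynomial R) (n : ℕ) :
    coeff (Finsupp.single i n) (p.toMvPolynomial i) = p.coeff n := by
  classical
  rw [toMvPolynomial_eq_sum_monomial, coeff_sum]
  simp [coeff_monomial, (Finsupp.single_injective i).eq_iff]
  exact fun h => h.symm

theorem totalDegree_toMvPolynomial (i : σ) (p : Polynomial R) :
    (p.toMvPolynomial i).totalDegree = p.natDegree := by
  classical
  refine le_antisymm (Finset.sup_le fun m hm => ?_) ?_
  · obtain ⟨n, hn, rfl⟩ := Finset.mem_image.mp (support_toMvPolynomial_subset i p hm)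
    simpa using Polynomial.le_natDegree_of_mem_supp n hn
  · rcases eq_or_ne p 0 with rfl | hp
    · simp
    · have hmem : Finsupp.single i p.natDegree ∈ (p.toMvPolynomial i).support := by
        rw [mem_support_iff, coeff_single_toMvPolynomial]
        exact Polynomial.leadingCoeff_ne_zero.mpr hp
      simpa using le_totalDegree hmem

theorem degreeOf_toMvPolynomial_le [DecidableEq σ] (i j : σ) (p : Polynomial R) :
    degreeOf j (p.toMvPolynomial i) ≤ if j = i then p.natDegree else 0 := by
  refine degreeOf_le_iff.mpr fun m hm => ?_
  obtain ⟨n, hn, rfl⟩ := Finset.mem_image.mp (support_toMvPolynomial_subset i p hm)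
  split_ifs with h
  · subst h
    simpa using Polynomial.le_natDegree_of_mem_supp n hn
  · simp [Ne.symm h]

end MvPolynomial

namespace Polynomial

theorem linearIndependent_of_natDegree_injective {R ι : Type*} [Ring R] [IsDomain R]
    {v : ι → R[X]} (hv : ∀ i, v i ≠ 0) (hinj : Function.Injective (natDegree ∘ v)) :
    LinearIndependent R v := by
  classical
  -- complete `v` to a `Polynomial.Sequence`, filling the missing degrees with powers of `X`
  let S : Sequence R :=
    { elems' := fun n => if h : ∃ i, (v i).natDegree = n then v h.choose else X ^ n
      degree_eq' := fun n => by
        split_ifs with h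
        · rw [degree_eq_natDegree (hv _), h.choose_spec]
        · exact degree_X_pow n }
  have hvS : v = fun i => S (v i).natDegree := _root_.funext fun i => by
    have h : ∃ j, (v j).natDegree = (v i).natDegree := ⟨i, rfl⟩
    change v i = if h : ∃ j, (v j).natDegree = (v i).natDegree then v h.choose else X ^ _
    rw [dif_pos h, hinj h.choose_spec]
  rw [hvS]
  exact S.linearIndependent.comp _ hinj

variable {R : Type*} [CommRing R] [IsDomain R]

theorem iterate_comp_X_ne_zero {f : R[X]} (hf : 0 < f.natDegree) (n : ℕ) :
    f.comp^[n] X ≠ 0 :=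
  ne_zero_of_natDegree_gt (n := 0) (by simpa using pow_pos hf n)

theorem natDegree_prod_iterate_comp_X_pow {f : R[X]} (hf : 0 < f.natDegree) {N : ℕ}
    (δ : Fin N → Fin f.natDegree) :
    (∏ n : Fin N, (f.comp^[n] X) ^ (δ n : ℕ)).natDegree = finFunctionFinEquiv δ := by
  rw [natDegree_prod _ (fun n : Fin N => (f.comp^[n] X) ^ (δ n : ℕ))
      fun n _ => pow_ne_zero _ (iterate_comp_X_ne_zero hf n),
    finFunctionFinEquiv_apply]
  simp [mul_comm]

theorem linearIndependent_prod_toMvPolynomial {d : ℕ} {n : Fin d → ℕ}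
    (p : ∀ j, Fin (n j) → R[X]) (hp0 : ∀ j a, p j a ≠ 0) (hp : ∀ j a, (p j a).natDegree = a) :
    LinearIndependent R fun α : (∀ j, Fin (n j)) => ∏ j, (p j (α j)).toMvPolynomial j := by
  rcases isEmpty_or_nonempty (∀ j, Fin (n j)) with hι | hι
  · exact linearIndependent_empty_type
  obtain ⟨α₀⟩ := hι
  -- Kronecker substitution `X_j ↦ X ^ w j` with the mixed-radix weights of `finPiFinEquiv`
  set w : Fin d → ℕ := fun j => ∏ k : Fin j, n (Fin.castLE j.is_lt.le k)
  have hw : ∀ j, 0 < w j := fun j => Finset.prod_pos fun k _ => (α₀ _).pos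
  let φ : MvPolynomial (Fin d) R →ₐ[R] R[X] := MvPolynomial.aeval fun j => X ^ w j
  have hφ : ∀ α : ∀ j, Fin (n j),
      φ (∏ j, (p j (α j)).toMvPolynomial j) = ∏ j, (p j (α j)).comp (X ^ w j) := by
    intro α
    simp [φ, comp_eq_aeval]
  have hfactor : ∀ j a, (p j a).comp (X ^ w j) ≠ 0 ∧
      ((p j a).comp (X ^ w j)).natDegree = a * w j := by
    intro j a
    have hXw : (X ^ w j : R[X]).natDegree ≠ 0 := by simpa using (hw j).ne'
    refine ⟨?_, by rw [natDegree_comp, natDegree_X_pow, hp]⟩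
    rw [← leadingCoeff_ne_zero, leadingCoeff_comp hXw, leadingCoeff_X_pow, one_pow, mul_one,
      leadingCoeff_ne_zero]
    exact hp0 j a
  have hdeg : ∀ α, (φ (∏ j, (p j (α j)).toMvPolynomial j)).natDegree = finPiFinEquiv α := by
    intro α
    rw [hφ, natDegree_prod _ _ fun j _ => (hfactor j (α j)).1, finPiFinEquiv_apply]
    exact Finset.sum_congr rfl fun j _ => (hfactor j (α j)).2
  refine LinearIndependent.of_comp φ.toLinearMap
    (linearIndependent_of_natDegree_injective (fun α => ?_) fun α β h => ?_)
  · simpa [hφ] using Finset.prod_ne_zero_iff.mpr fun j _ => (hfactor j (α j)).1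
  · simp only [Function.comp_apply, AlgHom.toLinearMap_apply, hdeg] at h
    exact finPiFinEquiv.injective (Fin.ext h)

end Polynomial

theorem satDeg_eq_of_growth {d : ℕ} (hd : 0 < d) {F : Fin d → MvPolynomial (Fin d) K} {P : ℝ}
    (hP : 0 < P) (hlow : ∃ L, ∀ N, P ^ N ≤ satRank F L N)
    (hup : ∀ L, ∃ C : ℝ, ∀ᶠ N : ℕ in atTop, (satRank F L N : ℝ) ≤ C * N ^ d * P ^ N) :
    satDeg F = P ^ (d⁻¹ : ℝ) := by
  set κ := P ^ (d⁻¹ : ℝ)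
  have hκ : 0 < κ := Real.rpow_pos_of_pos hP _
  have hκd : κ ^ d = P := Real.rpow_inv_natCast_pow hP.le hd.ne'
  have hmem : ∀ c, 0 < c → c < κ → 0 < c ∧ ∃ L : ℕ, ∀ᶠ N : ℕ in atTop,
      (c ^ (d * N) : ℝ) < (satRank F L N : ℝ) := by
    intro c hc hcκ
    obtain ⟨L, hL⟩ := hlow
    refine ⟨hc, L, (eventually_ge_atTop 1).mono fun N hN => ?_⟩
    calc c ^ (d * N) < κ ^ (d * N) := pow_lt_pow_left₀ hcκ hc.le (by positivity)
      _ = P ^ N := by rw [pow_mul, hκd]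
      _ ≤ satRank F L N := hL N
  refine csSup_eq_of_forall_le_of_forall_lt_exists_gt ⟨κ / 2, hmem _ (by positivity) (by linarith)⟩
    (fun c ⟨hc, L, hL⟩ => ?_) fun w hw => ?_
  · by_contra! hκc
    obtain ⟨C, hC⟩ := hup L
    -- `P ^ N` loses against `(c ^ d) ^ N` by a geometric factor, which beats `C * N ^ d`
    set ρ := c ^ d / P
    have hρ : 1 < ρ := (one_lt_div hP).mpr (hκd ▸ pow_lt_pow_left₀ hκc hκ.le hd.ne')
    have hsmall : ∀ᶠ N : ℕ in atTop, C * ((N : ℝ) ^ d / ρ ^ N) < 1 := by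
      simpa using ((tendsto_pow_const_div_const_pow_of_one_lt d hρ).const_mul C).eventually
        (gt_mem_nhds (by simp : C * 0 < 1))
    obtain ⟨N, hN, hCN, hsN⟩ := (hL.and (hC.and hsmall)).exists
    have hρN : 0 < ρ ^ N := pow_pos (one_pos.trans hρ) N
    have : C * N ^ d * P ^ N < c ^ (d * N) := by
      rw [mul_div_assoc', div_lt_one hρN] at hsN
      calc C * N ^ d * P ^ N < ρ ^ N * P ^ N := mul_lt_mul_of_pos_right hsN (pow_pos hP N)
        _ = c ^ (d * N) := by rw [← mul_pow, div_mul_cancel₀ _ hP.ne', pow_mul]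
    linarith
  · obtain ⟨c, hc, hcκ, hwc⟩ : ∃ c, 0 < c ∧ c < κ ∧ w < c :=
      ⟨(max w 0 + κ) / 2, by positivity, by linarith [max_lt hw hκ], by linarith [le_max_left w 0]⟩
    exact ⟨c, hmem c hc hcκ, hwc⟩

def satProduct {R : Type*} [CommSemiring R] {d : ℕ} (F : Fin d → MvPolynomial (Fin d) R)
    (L N : ℕ) (s : Finset (Fin d × Fin N × Fin L)) : MvPolynomial (Fin d) R :=
  ∏ t ∈ s, polyIter F t.2.1 t.1 ^ (t.2.2 : ℕ)

theorem satRank_eq_finrank_span {d : ℕ} (F : Fin d → MvPolynomial (Fin d) K) (L N : ℕ) :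
    satRank F L N = Module.finrank K (Submodule.span K (Set.range (satProduct F L N))) :=
  rfl

section SplitMap

variable {d : ℕ}

def splitMap {R : Type*} [CommSemiring R] (f : Fin d → Polynomial R) :
    Fin d → MvPolynomial (Fin d) R :=
  fun j => Polynomial.eval₂ C (X j) (f j)

theorem polyIter_splitMap {R : Type*} [CommSemiring R] (f : Fin d → Polynomial R) (n : ℕ)
    (j : Fin d) : polyIter (splitMap f) n j = ((f j).comp^[n] Polynomial.X).toMvPolynomial j := by
  induction n generalizing j with
  | zero => simp [polyIter]
  | succ n ih =>
    have hsplit : splitMap f j = (f j).toMvPolynomial j := by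
      rw [Polynomial.toMvPolynomial, Polynomial.aeval_def, algebraMap_eq, splitMap]
    change bind₁ _ (splitMap f j) = _
    rw [hsplit, bind₁, aeval_toMvPolynomial, ih, Polynomial.aeval_algHom_apply,
      ← Polynomial.comp_eq_aeval, Function.iterate_succ_apply']

theorem polyDeg_polyIter_splitMap {R : Type*} [CommRing R] [IsDomain R]
    (f : Fin d → Polynomial R) (n : ℕ) :
    polyDeg (polyIter (splitMap f) n) = Finset.univ.sup fun j => (f j).natDegree ^ n := by
  simp [polyDeg, polyIter_splitMap, totalDegree_toMvPolynomial]

theorem tendsto_polyDeg_polyIter_splitMap {R : Type*} [CommRing R] [IsDomain R]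
    (f : Fin d → Polynomial R) :
    Tendsto (fun n : ℕ => (polyDeg (polyIter (splitMap f) n) : ℝ) ^ (n⁻¹ : ℝ)) atTop
      (nhds (Finset.univ.sup fun j => (f j).natDegree : ℕ)) := by
  refine tendsto_const_nhds.congr' ((eventually_ge_atTop 1).mono fun n hn => ?_)
  have hsup : (Finset.univ.sup fun j => (f j).natDegree ^ n) =
      (Finset.univ.sup fun j => (f j).natDegree) ^ n :=
    (Finset.apply_sup_eq_sup_comp_of_linearOrder _ (pow_left_mono n) (zero_pow (by omega))).symm
  beta_reduce
  rw [eq_comm, polyDeg_polyIter_splitMap, hsup, Nat.cast_pow,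
    Real.pow_rpow_inv_natCast (by positivity) (by omega)]

variable {f : Fin d → Polynomial K}

theorem degreeOf_polyIter_splitMap_le (hq : ∀ j, 0 < (f j).natDegree) {n N : ℕ} (hn : n ≤ N)
    (i j : Fin d) : degreeOf j (polyIter (splitMap f) n i) ≤ (f j).natDegree ^ N := by
  classical
  refine (polyIter_splitMap f n i ▸ degreeOf_toMvPolynomial_le i j _).trans ?_
  split_ifs with h
  · subst h
    simpa using Nat.pow_le_pow_right (hq j) hn
  · exact Nat.zero_le _

theorem degreeOf_satProduct_splitMap_le (hq : ∀ j, 0 < (f j).natDegree) {L N : ℕ}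
    (s : Finset (Fin d × Fin N × Fin L)) (j : Fin d) :
    degreeOf j (satProduct (splitMap f) L N s) ≤ d * N * L * L * (f j).natDegree ^ N := by
  calc _ ≤ ∑ t ∈ s, degreeOf j (polyIter (splitMap f) t.2.1 t.1 ^ (t.2.2 : ℕ)) :=
        degreeOf_prod_le j s _
    _ ≤ ∑ _t ∈ s, L * (f j).natDegree ^ N := Finset.sum_le_sum fun t _ =>
        (degreeOf_pow_le j _ _).trans (Nat.mul_le_mul t.2.2.is_lt.le
          (degreeOf_polyIter_splitMap_le hq t.2.1.is_lt.le t.1 j))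
    _ ≤ d * N * L * (L * (f j).natDegree ^ N) := by
        rw [Finset.sum_const, smul_eq_mul]
        exact Nat.mul_le_mul_right _ ((Finset.card_le_univ s).trans (by simp [mul_assoc]))
    _ = d * N * L * L * (f j).natDegree ^ N := by ring

theorem satRank_splitMap_le (hq : ∀ j, 0 < (f j).natDegree) (L N : ℕ) :
    satRank (splitMap f) L N ≤ ∏ j, (d * N * L * L * (f j).natDegree ^ N + 1) := by
  set box : Finset (Fin d →₀ ℕ) := (Finset.Iic fun j => d * N * L * L * (f j).natDegree ^ N).map
    Finsupp.equivFunOnFinite.symm.toEmbedding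
  have hbasis := basisRestrictSupport K (box : Set (Fin d →₀ ℕ))
  have := Module.Finite.of_basis hbasis
  have hspan : Submodule.span K (Set.range (satProduct (splitMap f) L N)) ≤
      restrictSupport K box := by
    rw [Submodule.span_le]
    rintro _ ⟨s, rfl⟩ m hm
    simpa [box, Pi.le_def] using fun j =>
      (monomial_le_degreeOf j hm).trans (degreeOf_satProduct_splitMap_le hq s j)
  calc satRank (splitMap f) L N
        ≤ Module.finrank K (restrictSupport K (box : Set (Fin d →₀ ℕ))) := by
        rw [satRank_eq_finrank_span]
        exact Submodule.finrank_mono hspan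
    _ = box.card := by simp [Module.finrank_eq_card_basis hbasis]
    _ = ∏ j, (d * N * L * L * (f j).natDegree ^ N + 1) := by simp [box, Pi.card_Iic]

theorem prod_pow_le_satRank_splitMap (hq : ∀ j, 0 < (f j).natDegree) {L : ℕ}
    (hL : ∀ j, (f j).natDegree ≤ L) (N : ℕ) :
    ∏ j, (f j).natDegree ^ N ≤ satRank (splitMap f) L N := by
  classical
  let p : ∀ j, Fin ((f j).natDegree ^ N) → Polynomial K := fun j a =>
    ∏ n : Fin N, ((f j).comp^[n] Polynomial.X) ^ (finFunctionFinEquiv.symm a n : ℕ)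
  have hli := Polynomial.linearIndependent_prod_toMvPolynomial p
    (fun j a => Finset.prod_ne_zero_iff.mpr fun n _ =>
      pow_ne_zero _ (Polynomial.iterate_comp_X_ne_zero (hq j) n))
    (fun j a => by
      simp only [p]
      rw [Polynomial.natDegree_prod_iterate_comp_X_pow (hq j), Equiv.apply_symm_apply])
  have hmem : ∀ α : ∀ j, Fin ((f j).natDegree ^ N), ∏ j, (p j (α j)).toMvPolynomial j ∈
      Set.range (satProduct (splitMap f) L N) := by
    intro α
    refine ⟨Finset.univ.image fun t : Fin d × Fin N =>
      (t.1, t.2, Fin.castLE (hL t.1) (finFunctionFinEquiv.symm (α t.1) t.2)), ?_⟩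
    rw [satProduct, Finset.prod_image, Fintype.prod_prod_type]
    · simp [p, map_prod, polyIter_splitMap]
    · intro t _ t' _ h
      simp only [Prod.mk.injEq] at h
      exact Prod.ext h.1 h.2.1
  have := FiniteDimensional.span_of_finite K (Set.finite_range (satProduct (splitMap f) L N))
  calc ∏ j, (f j).natDegree ^ N = Fintype.card (∀ j, Fin ((f j).natDegree ^ N)) := by simp
    _ = _ := (finrank_span_eq_card hli).symm
    _ ≤ satRank (splitMap f) L N := by
        rw [satRank_eq_finrank_span]
        exact Submodule.finrank_mono (Submodule.span_mono (Set.range_subset_iff.mpr hmem))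

theorem satDeg_splitMap (hd : 0 < d) (hq : ∀ j, 0 < (f j).natDegree) :
    satDeg (splitMap f) = (∏ j, ((f j).natDegree : ℝ)) ^ (d⁻¹ : ℝ) := by
  refine satDeg_eq_of_growth hd (Finset.prod_pos fun j _ => by exact_mod_cast hq j)
    ⟨Finset.univ.sup fun j => (f j).natDegree, fun N => ?_⟩
    fun L => ⟨(d * L * L + 1) ^ d, (eventually_ge_atTop 1).mono fun N hN => ?_⟩
  · have := prod_pow_le_satRank_splitMap hq
      (fun j => Finset.le_sup (f := fun j => (f j).natDegree) (Finset.mem_univ j)) N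
    rw [← Finset.prod_pow]
    exact_mod_cast this
  · have hN' : (1 : ℝ) ≤ N := by exact_mod_cast hN
    calc (satRank (splitMap f) L N : ℝ)
        ≤ ∏ j, ((d * N * L * L : ℝ) * (f j).natDegree ^ N + 1) := by
          exact_mod_cast satRank_splitMap_le hq L N
      _ ≤ ∏ j, ((d * L * L + 1) * N * ((f j).natDegree : ℝ) ^ N) := by
          refine Finset.prod_le_prod (fun j _ => by positivity) fun j _ => ?_
          have : (1 : ℝ) ≤ N * (f j).natDegree ^ N :=
            one_le_mul_of_one_le_of_one_le hN' (one_le_pow₀ (by exact_mod_cast hq j))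
          nlinarith
      _ = (d * L * L + 1) ^ d * N ^ d * (∏ j, ((f j).natDegree : ℝ)) ^ N := by
          simp [Finset.prod_mul_distrib, Finset.prod_pow, mul_pow]

end SplitMap

/-- the basic example of section 6.1 of the paper. For a split map
`F = (f_1(x_1), …, f_d(x_d))` with `q_j := deg f_j > 0`, the saturation degree is
`κ = (q_1 ⋯ q_d)^{1/d}` while the dynamic degree is `δ = max_j q_j`. -/
theorem sat_deg_and_dyn_deg_of_split_map
    {K : Type*} [Field K] (d : ℕ) (hd : 0 < d)
    (f : Fin d → Polynomial K) (hq : ∀ j, 0 < (f j).natDegree) :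
    satDeg (fun j : Fin d => Polynomial.eval₂ MvPolynomial.C (MvPolynomial.X j) (f j)) =
      (∏ j : Fin d, ((f j).natDegree : ℝ)) ^ ((d : ℝ)⁻¹) ∧
    Tendsto (fun n : ℕ =>
        ((polyDeg (polyIter
          (fun j : Fin d => Polynomial.eval₂ MvPolynomial.C (MvPolynomial.X j) (f j)) n) : ℝ))
          ^ ((n : ℝ)⁻¹)) atTop
      (nhds ((Finset.univ.sup fun j : Fin d => (f j).natDegree : ℕ) : ℝ)) :=
  ⟨satDeg_splitMap hd hq, tendsto_polyDeg_polyIter_splitMap f⟩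

end
end

section
/- Let F : K^d → K^d be an additive polynomial mapping over K, P ∈ K^d, and s_1 < s_2 natural numbers. Set Q := F^{∘s_2}(P) − F^{∘s_1}(P). Then the arithmetic degrees satisfy α(Q) ≤ α(P). -/
/-!
An additive map commutes with subtraction, so `F^n(Q) = F^{n+s₂}(P) - F^{n+s₁}(P)`. Pole orders
satisfy the ultrametric inequality, hence the height is subadditive under subtraction and
`h(F^n Q) ≤ h(F^{n+s₂} P) + h(F^{n+s₁} P)`. Since `h(F x) ≤ deg F · h(x) + O(1)`, the heights
along the orbit of `P` grow at most exponentially, and then shifting the orbit by a fixed number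
of steps does not change the exponential growth rate `limsup h^{1/n}`.
-/

open MvPolynomial Filter

noncomputable section

variable {K : Type*} [Field K]

lemma Function.HasFiniteSupport.finsetSup {α ι : Type*} {s : Finset ι} {f : ι → α → ℕ}
    (hf : ∀ i ∈ s, (f i).HasFiniteSupport) :
    (fun v => s.sup fun i => f i v).HasFiniteSupport := by
  refine (s.finite_toSet.biUnion hf).subset fun v hv => ?_
  obtain ⟨i, hi, hiv⟩ : ∃ i ∈ s, f i v ≠ 0 := by
    by_contra! hc
    exact hv ((Finset.sup_eq_bot_iff _ _).2 hc)
  exact Set.mem_biUnion hi hiv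

namespace PlaceData

variable (Pl : PlaceData K)

def poleOrder (v : Pl.Pt) (a : K) : ℕ := (-(Pl.ordMinus v a)).toNat

def maxPoleOrder {ι : Type*} [Fintype ι] (v : Pl.Pt) (x : ι → K) : ℕ :=
  Finset.univ.sup fun j => Pl.poleOrder v (x j)

variable {Pl} {v : Pl.Pt}

@[simp] lemma poleOrder_zero : Pl.poleOrder v 0 = 0 := by
  simp [poleOrder, ordMinus]

@[simp] lemma poleOrder_one : Pl.poleOrder v 1 = 0 := by
  simp [poleOrder, ordMinus, Pl.ord_one]

lemma poleOrder_of_ne_zero {a : K} (ha : a ≠ 0) : Pl.poleOrder v a = (-Pl.ord v a).toNat := by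
  simp only [poleOrder, ordMinus, ha, if_false]
  omega

lemma ord_neg_one : Pl.ord v (-1) = 0 := by
  have h := Pl.ord_mul v (-1) (-1) (neg_ne_zero.2 one_ne_zero) (neg_ne_zero.2 one_ne_zero)
  rw [neg_one_mul, neg_neg, Pl.ord_one] at h
  omega

lemma ord_neg {a : K} (ha : a ≠ 0) : Pl.ord v (-a) = Pl.ord v a := by
  rw [neg_eq_neg_one_mul, Pl.ord_mul v _ _ (neg_ne_zero.2 one_ne_zero) ha, ord_neg_one, zero_add]

@[simp] lemma poleOrder_neg (a : K) : Pl.poleOrder v (-a) = Pl.poleOrder v a := by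
  rcases eq_or_ne a 0 with rfl | ha
  · simp
  · rw [poleOrder_of_ne_zero ha, poleOrder_of_ne_zero (neg_ne_zero.2 ha), ord_neg ha]

lemma poleOrder_add_le (a b : K) :
    Pl.poleOrder v (a + b) ≤ max (Pl.poleOrder v a) (Pl.poleOrder v b) := by
  rcases eq_or_ne a 0 with rfl | ha
  · simp
  rcases eq_or_ne b 0 with rfl | hb
  · simp
  rcases eq_or_ne (a + b) 0 with hab | hab
  · simp [hab]
  have := Pl.min_le_ord_add v a b ha hb hab
  rw [poleOrder_of_ne_zero ha, poleOrder_of_ne_zero hb, poleOrder_of_ne_zero hab]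
  omega

lemma poleOrder_sub_le (a b : K) :
    Pl.poleOrder v (a - b) ≤ max (Pl.poleOrder v a) (Pl.poleOrder v b) := by
  simpa [sub_eq_add_neg] using poleOrder_add_le a (-b)

lemma poleOrder_mul_le (a b : K) :
    Pl.poleOrder v (a * b) ≤ Pl.poleOrder v a + Pl.poleOrder v b := by
  rcases eq_or_ne a 0 with rfl | ha
  · simp
  rcases eq_or_ne b 0 with rfl | hb
  · simp
  rw [poleOrder_of_ne_zero ha, poleOrder_of_ne_zero hb, poleOrder_of_ne_zero (mul_ne_zero ha hb),
    Pl.ord_mul v a b ha hb]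
  omega

lemma poleOrder_pow_le (a : K) (m : ℕ) : Pl.poleOrder v (a ^ m) ≤ m * Pl.poleOrder v a := by
  induction m with
  | zero => simp
  | succ m ih =>
    rw [pow_succ, add_one_mul]
    exact (poleOrder_mul_le _ _).trans (Nat.add_le_add_right ih _)

lemma poleOrder_prod_le {ι : Type*} (s : Finset ι) (f : ι → K) :
    Pl.poleOrder v (∏ i ∈ s, f i) ≤ ∑ i ∈ s, Pl.poleOrder v (f i) := by
  classical
  induction s using Finset.induction_on with
  | empty => simp
  | insert i s hi ih =>
    rw [Finset.prod_insert hi, Finset.sum_insert hi]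
    exact (poleOrder_mul_le _ _).trans (Nat.add_le_add_left ih _)

lemma poleOrder_sum_le {ι : Type*} (s : Finset ι) (f : ι → K) :
    Pl.poleOrder v (∑ i ∈ s, f i) ≤ s.sup fun i => Pl.poleOrder v (f i) := by
  classical
  induction s using Finset.induction_on with
  | empty => simp
  | insert i s hi ih =>
    rw [Finset.sum_insert hi, Finset.sup_insert]
    exact (poleOrder_add_le _ _).trans (max_le_max le_rfl ih)

lemma poleOrder_le_maxPoleOrder {ι : Type*} [Fintype ι] (x : ι → K) (j : ι) :
    Pl.poleOrder v (x j) ≤ Pl.maxPoleOrder v x :=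
  Finset.le_sup (f := fun j => Pl.poleOrder v (x j)) (Finset.mem_univ j)

lemma maxPoleOrder_sub_le {ι : Type*} [Fintype ι] (x y : ι → K) :
    Pl.maxPoleOrder v (x - y) ≤ max (Pl.maxPoleOrder v x) (Pl.maxPoleOrder v y) :=
  Finset.sup_le fun j _ => (poleOrder_sub_le (x j) (y j)).trans
    (max_le_max (poleOrder_le_maxPoleOrder x j) (poleOrder_le_maxPoleOrder y j))

lemma poleOrder_eval_le {ι : Type*} [Fintype ι] (f : MvPolynomial ι K) (x : ι → K) :
    Pl.poleOrder v (eval x f) ≤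
      f.support.sup (fun m => Pl.poleOrder v (f.coeff m)) + f.totalDegree * Pl.maxPoleOrder v x := by
  rw [eval_eq']
  refine (poleOrder_sum_le _ _).trans (Finset.sup_le fun m hm => ?_)
  have hmono : ∑ i, Pl.poleOrder v (x i ^ m i) ≤ f.totalDegree * Pl.maxPoleOrder v x :=
    calc ∑ i, Pl.poleOrder v (x i ^ m i)
        ≤ ∑ i, m i * Pl.maxPoleOrder v x :=
          Finset.sum_le_sum fun i _ =>
            (poleOrder_pow_le _ _).trans (Nat.mul_le_mul_left _ (poleOrder_le_maxPoleOrder x i))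
      _ = (m.sum fun _ e => e) * Pl.maxPoleOrder v x := by
          rw [← Finset.sum_mul, Finsupp.sum_fintype _ _ fun _ => rfl]
      _ ≤ f.totalDegree * Pl.maxPoleOrder v x := Nat.mul_le_mul_right _ (le_totalDegree hm)
  calc Pl.poleOrder v (f.coeff m * ∏ i, x i ^ m i)
      ≤ Pl.poleOrder v (f.coeff m) + ∑ i, Pl.poleOrder v (x i ^ m i) :=
        (poleOrder_mul_le _ _).trans (Nat.add_le_add_left (poleOrder_prod_le _ _) _)
    _ ≤ _ := Nat.add_le_add
        (Finset.le_sup (f := fun m => Pl.poleOrder v (f.coeff m)) hm) hmono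

lemma hasFiniteSupport_poleOrder (a : K) : (fun v => Pl.poleOrder v a).HasFiniteSupport := by
  rcases eq_or_ne a 0 with rfl | ha
  · simp [Function.HasFiniteSupport]
  refine (Pl.finite_mulSupport a ha).subset fun v hv => ?_
  rw [Function.mem_support, poleOrder_of_ne_zero ha] at hv
  exact fun h0 => hv (by rw [h0]; rfl)

lemma hasFiniteSupport_maxPoleOrder {ι : Type*} [Fintype ι] (x : ι → K) :
    (fun v => Pl.maxPoleOrder v x).HasFiniteSupport :=
  Function.HasFiniteSupport.finsetSup fun j _ => hasFiniteSupport_poleOrder (x j)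

variable (Pl)

/-- The degree of the effective divisor `∑_v φ(v) · v`. -/
def logDeg (φ : Pl.Pt → ℕ) : ℝ := ∑ᶠ v, (φ v : ℝ) * Real.log (Pl.resCard v)

lemma h_eq_logDeg {d : ℕ} (x : Fin d → K) : Pl.h x = Pl.logDeg (Pl.maxPoleOrder · x) := rfl

variable {Pl}

lemma log_resCard_pos (v : Pl.Pt) : 0 < Real.log (Pl.resCard v) :=
  Real.log_pos (by exact_mod_cast Pl.two_le_resCard v)

lemma logDeg_nonneg (φ : Pl.Pt → ℕ) : 0 ≤ Pl.logDeg φ :=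
  finsum_nonneg fun v => mul_nonneg (Nat.cast_nonneg _) (log_resCard_pos v).le

lemma logDeg_le_add_mul {φ ψ χ : Pl.Pt → ℕ} (hψ : ψ.HasFiniteSupport) (hχ : χ.HasFiniteSupport)
    (b : ℕ) (h : ∀ v, φ v ≤ ψ v + b * χ v) :
    Pl.logDeg φ ≤ Pl.logDeg ψ + b * Pl.logDeg χ := by
  have hterm {θ : Pl.Pt → ℕ} (hθ : θ.HasFiniteSupport) :
      (fun v => (θ v : ℝ) * Real.log (Pl.resCard v)).HasFiniteSupport :=
    hθ.subset fun v hv h0 => hv (by simp [h0])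
  have hχ' : (fun v => (b : ℝ) * ((χ v : ℝ) * Real.log (Pl.resCard v))).HasFiniteSupport :=
    (hterm hχ).mul_right _
  have hφ : φ.HasFiniteSupport := (hψ.union hχ).subset fun v hv => by
    by_contra hc
    simp only [Set.mem_union, Function.mem_support, not_or, not_not] at hc
    exact hv (by simpa [hc] using h v)
  rw [logDeg, logDeg, logDeg, mul_finsum, ← finsum_add_distrib (hterm hψ) hχ']
  refine finsum_le_finsum' (hterm hφ) ((hterm hψ).add hχ') fun v => ?_
  rw [← mul_assoc, ← add_mul]
  have hv : (φ v : ℝ) ≤ ψ v + b * χ v := by exact_mod_cast h v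
  exact mul_le_mul_of_nonneg_right hv (log_resCard_pos v).le

lemma h_nonneg {d : ℕ} (x : Fin d → K) : 0 ≤ Pl.h x := logDeg_nonneg _

lemma h_sub_le {d : ℕ} (x y : Fin d → K) : Pl.h (x - y) ≤ Pl.h x + Pl.h y := by
  rw [h_eq_logDeg, h_eq_logDeg, h_eq_logDeg]
  simpa only [Nat.cast_one, one_mul] using logDeg_le_add_mul (hasFiniteSupport_maxPoleOrder x)
    (hasFiniteSupport_maxPoleOrder y) 1 fun v =>
      (maxPoleOrder_sub_le x y).trans (by omega)

lemma exists_h_polyMapEval_le {d e : ℕ} (F : Fin e → MvPolynomial (Fin d) K) :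
    ∃ C, 0 ≤ C ∧ ∀ x, Pl.h (polyMapEval F x) ≤ polyDeg F * Pl.h x + C := by
  set A : Pl.Pt → ℕ := fun v =>
    Finset.univ.sup fun j => (F j).support.sup fun m => Pl.poleOrder v ((F j).coeff m)
  have hA : A.HasFiniteSupport := Function.HasFiniteSupport.finsetSup fun j _ =>
    Function.HasFiniteSupport.finsetSup fun m _ => hasFiniteSupport_poleOrder _
  refine ⟨Pl.logDeg A, logDeg_nonneg A, fun x => ?_⟩
  rw [h_eq_logDeg, h_eq_logDeg, add_comm]
  refine logDeg_le_add_mul hA (hasFiniteSupport_maxPoleOrder x) _ fun v =>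
    Finset.sup_le fun j _ => (poleOrder_eval_le (F j) x).trans (Nat.add_le_add ?_ ?_)
  · exact Finset.le_sup (f := fun j => (F j).support.sup fun m => Pl.poleOrder v ((F j).coeff m))
      (Finset.mem_univ j)
  · exact Nat.mul_le_mul_right _
      (Finset.le_sup (f := fun j => (F j).totalDegree) (Finset.mem_univ j))

end PlaceData

lemma IsAddPoly.eval_sub {R : Type*} [CommRing R] {p d : ℕ} [ExpChar R p]
    {f : MvPolynomial (Fin d) R} (hf : IsAddPoly p f) (x y : Fin d → R) :
    eval (x - y) f = eval x f - eval y f := by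
  obtain ⟨r, a, rfl⟩ := hf
  simp only [map_sum, eval_mul, eval_C, eval_pow, eval_X, Pi.sub_apply, sub_pow_expChar_pow,
    mul_sub, Finset.sum_sub_distrib]

lemma iterate_polyMapEval_sub {R : Type*} [CommRing R] {p d : ℕ} [ExpChar R p]
    {F : Fin d → MvPolynomial (Fin d) R} (hF : ∀ j, IsAddPoly p (F j)) (n : ℕ)
    (x y : Fin d → R) :
    (polyMapEval F)^[n] (x - y) = (polyMapEval F)^[n] x - (polyMapEval F)^[n] y :=
  Function.Semiconj₂.iterate (fun x y => funext fun j => (hF j).eval_sub x y) n x y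

lemma le_mul_pow_of_le_mul_add {u : ℕ → ℝ} {D C : ℝ} (hD : 0 ≤ D) (hC : 0 ≤ C) (hu₀ : 0 ≤ u 0)
    (h : ∀ n, u (n + 1) ≤ D * u n + C) (n : ℕ) : u n ≤ (u 0 + C) * (D + 1) ^ n := by
  induction n with
  | zero => simpa using hC
  | succ n ih =>
    have hpow : 1 ≤ (D + 1) ^ n := one_le_pow₀ (by linarith)
    calc u (n + 1) ≤ D * ((u 0 + C) * (D + 1) ^ n) + (u 0 + C) * (D + 1) ^ n := by
          nlinarith [h n]
      _ = (u 0 + C) * (D + 1) ^ (n + 1) := by ring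

section GrowthRate

open Real Topology

variable {u v : ℕ → ℝ}

lemma tendsto_const_rpow_inv_natCast {c : ℝ} (hc : 0 < c) :
    Tendsto (fun n : ℕ => c ^ (n : ℝ)⁻¹) atTop (𝓝 1) := by
  simpa using tendsto_const_nhds.rpow (tendsto_inv_atTop_zero.comp tendsto_natCast_atTop_atTop)
    (Or.inl hc.ne')

lemma rpow_inv_natCast_le_of_le_mul_pow {x c B : ℝ} {n : ℕ} (hn : n ≠ 0) (hx : 0 ≤ x)
    (hc : 0 ≤ c) (hB : 0 ≤ B) (h : x ≤ c * B ^ n) : x ^ (n : ℝ)⁻¹ ≤ c ^ (n : ℝ)⁻¹ * B :=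
  calc x ^ (n : ℝ)⁻¹ ≤ (c * B ^ n) ^ (n : ℝ)⁻¹ := rpow_le_rpow hx h (by positivity)
    _ = c ^ (n : ℝ)⁻¹ * B := by rw [mul_rpow hc (by positivity), pow_rpow_inv_natCast hB hn]

lemma eventually_rpow_inv_le_of_le_mul_pow {c B : ℝ} (hv : ∀ n, 0 ≤ v n) (hc : 0 ≤ c)
    (hB : 0 ≤ B) (h : ∀ᶠ n in atTop, v n ≤ c * B ^ n) :
    ∀ᶠ n in atTop, v n ^ (n : ℝ)⁻¹ ≤ c ^ (n : ℝ)⁻¹ * B := by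
  filter_upwards [h, eventually_ne_atTop 0] with n hn hn₀
  exact rpow_inv_natCast_le_of_le_mul_pow hn₀ (hv n) hc hB hn

lemma limsup_rpow_inv_le_of_eventually_le_mul_pow {c B : ℝ} (hv : ∀ n, 0 ≤ v n) (hc : 0 < c)
    (hB : 0 ≤ B) (h : ∀ᶠ n in atTop, v n ≤ c * B ^ n) :
    limsup (fun n => v n ^ (n : ℝ)⁻¹) atTop ≤ B := by
  have ht : Tendsto (fun n : ℕ => c ^ (n : ℝ)⁻¹ * B) atTop (𝓝 B) := by
    simpa using (tendsto_const_rpow_inv_natCast hc).mul_const B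
  calc limsup (fun n => v n ^ (n : ℝ)⁻¹) atTop
      ≤ limsup (fun n : ℕ => c ^ (n : ℝ)⁻¹ * B) atTop :=
        limsup_le_limsup (eventually_rpow_inv_le_of_le_mul_pow hv hc.le hB h)
          (isCoboundedUnder_le_of_le atTop fun n => rpow_nonneg (hv n) _) ht.isBoundedUnder_le
    _ = B := ht.limsup_eq

lemma isBoundedUnder_rpow_inv_of_le_mul_pow {c B : ℝ} (hu : ∀ n, 0 ≤ u n) (hc : 0 ≤ c)
    (hB : 0 ≤ B) (h : ∀ n, u n ≤ c * B ^ n) :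
    IsBoundedUnder (· ≤ ·) atTop fun n => u n ^ (n : ℝ)⁻¹ := by
  have ht : Tendsto (fun n : ℕ => (c + 1) ^ (n : ℝ)⁻¹ * B) atTop (𝓝 B) := by
    simpa using (tendsto_const_rpow_inv_natCast (by linarith)).mul_const B
  refine ht.isBoundedUnder_le.mono_le (eventually_rpow_inv_le_of_le_mul_pow hu (by linarith) hB
    (Eventually.of_forall fun n => (h n).trans ?_))
  exact mul_le_mul_of_nonneg_right (by linarith) (pow_nonneg hB n)

lemma eventually_lt_pow_of_limsup_rpow_inv_lt {B : ℝ} (hu : ∀ n, 0 ≤ u n)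
    (hbdd : IsBoundedUnder (· ≤ ·) atTop fun n => u n ^ (n : ℝ)⁻¹)
    (hB : limsup (fun n => u n ^ (n : ℝ)⁻¹) atTop < B) : ∀ᶠ n in atTop, u n < B ^ n := by
  filter_upwards [eventually_lt_of_limsup_lt hB hbdd, eventually_ne_atTop 0] with n hn hn₀
  calc u n = (u n ^ (n : ℝ)⁻¹) ^ n := (rpow_inv_natCast_pow (hu n) hn₀).symm
    _ < B ^ n := pow_lt_pow_left₀ hn (rpow_nonneg (hu n) _) hn₀

lemma limsup_rpow_inv_le_of_le_add_shift (hu : ∀ n, 0 ≤ u n) (hv : ∀ n, 0 ≤ v n)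
    (hbdd : IsBoundedUnder (· ≤ ·) atTop fun n => u n ^ (n : ℝ)⁻¹) (s t : ℕ)
    (h : ∀ n, v n ≤ u (n + s) + u (n + t)) :
    limsup (fun n => v n ^ (n : ℝ)⁻¹) atTop ≤ limsup (fun n => u n ^ (n : ℝ)⁻¹) atTop := by
  refine le_of_forall_gt_imp_ge_of_dense fun B hB => ?_
  have hB₀ : 0 < B := lt_of_le_of_lt
    (le_limsup_of_frequently_le (Frequently.of_forall fun n => rpow_nonneg (hu n) _) hbdd) hB
  have hlt := eventually_lt_pow_of_limsup_rpow_inv_lt hu hbdd hB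
  refine limsup_rpow_inv_le_of_eventually_le_mul_pow hv (c := B ^ s + B ^ t) (by positivity)
    hB₀.le ?_
  filter_upwards [(tendsto_add_atTop_nat s).eventually hlt,
    (tendsto_add_atTop_nat t).eventually hlt] with n hs ht
  calc v n ≤ u (n + s) + u (n + t) := h n
    _ ≤ B ^ (n + s) + B ^ (n + t) := add_le_add hs.le ht.le
    _ = (B ^ s + B ^ t) * B ^ n := by ring

end GrowthRate

theorem arith_deg_of_orbit_difference_le_general
    {K : Type*} [Field K] (Pl : PlaceData K) (p d : ℕ) (hp : p.Prime) [CharP K p]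
    (F : Fin d → MvPolynomial (Fin d) K) (hFadd : ∀ j, IsAddPoly p (F j))
    (P : Fin d → K) (s₁ s₂ : ℕ) :
    limsup (fun n : ℕ =>
        (Pl.h ((polyMapEval F)^[n] ((polyMapEval F)^[s₂] P - (polyMapEval F)^[s₁] P)))
          ^ ((n : ℝ)⁻¹)) atTop ≤
      limsup (fun n : ℕ => (Pl.h ((polyMapEval F)^[n] P)) ^ ((n : ℝ)⁻¹)) atTop := by
  have : ExpChar K p := .prime hp
  obtain ⟨C, hC, hF⟩ := PlaceData.exists_h_polyMapEval_le (Pl := Pl) F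
  have hgrowth : ∀ n, Pl.h ((polyMapEval F)^[n] P) ≤ (Pl.h P + C) * (polyDeg F + 1) ^ n :=
    le_mul_pow_of_le_mul_add (Nat.cast_nonneg _) hC (PlaceData.h_nonneg P) fun n => by
      rw [Function.iterate_succ_apply']
      exact hF _
  refine limsup_rpow_inv_le_of_le_add_shift (fun _ => PlaceData.h_nonneg _)
    (fun _ => PlaceData.h_nonneg _) (isBoundedUnder_rpow_inv_of_le_mul_pow
      (fun _ => PlaceData.h_nonneg _) (add_nonneg (PlaceData.h_nonneg P) hC)
      (by positivity) hgrowth)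
    s₂ s₁ fun n => ?_
  rw [iterate_polyMapEval_sub hFadd, ← Function.iterate_add_apply, ← Function.iterate_add_apply]
  exact PlaceData.h_sub_le _ _

/-- section 4.1 of the paper. For an additive polynomial self-map `F` of
`K^d`, a point `P ∈ K^d` and `s_1 < s_2`, the point `Q := F^{∘s_2}(P) − F^{∘s_1}(P)`
satisfies `α(Q) ≤ α(P)` for the arithmetic degrees. -/
theorem arith_deg_of_orbit_difference_le
    {K : Type*} [Field K] (Pl : PlaceData K) (p d : ℕ) (hp : p.Prime) [CharP K p]
    (hd : 0 < d)
    (F : Fin d → MvPolynomial (Fin d) K) (hFadd : ∀ j, IsAddPoly p (F j))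
    (P : Fin d → K) (s₁ s₂ : ℕ) (hs : s₁ < s₂) :
    limsup (fun n : ℕ =>
        (Pl.h ((polyMapEval F)^[n] ((polyMapEval F)^[s₂] P - (polyMapEval F)^[s₁] P)))
          ^ ((n : ℝ)⁻¹)) atTop ≤
      limsup (fun n : ℕ => (Pl.h ((polyMapEval F)^[n] P)) ^ ((n : ℝ)⁻¹)) atTop :=
  arith_deg_of_orbit_difference_le_general Pl p d hp F hFadd P s₁ s₂

end
end
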